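/- arXiv:1603.00932 — 9 statements merged into one kernel-verified Lean document; each statement's English description precedes it below -/
import Mathlib

section
/- Let (B,C) be a precontact algebra. Define the relation C# on B by: a C# b iff (a C b, or b C a, or a·b ≠ 0). Then C# is a contact relation on B, i.e. (B, C#) is a contact algebra. -/
/-- A precontact relation on a Boolean algebra. -/
def IsPrecontactRel {B : Type*} [BooleanAlgebra B] (C : B → B → Prop) : Prop :=
  (∀ a b : B, C a b → a ≠ ⊥ ∧ b ≠ ⊥) ∧
  (∀ a b c : B, C a (b ⊔ c) ↔ C a b ∨ C a c) ∧
  (∀ a b c : B, C (a ⊔ b) c ↔ C a c ∨ C b c)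

/-- A contact relation on a Boolean algebra. -/
def IsContactRel {B : Type*} [BooleanAlgebra B] (C : B → B → Prop) : Prop :=
  IsPrecontactRel C ∧ (∀ a : B, a ≠ ⊥ → C a a) ∧ (∀ a b : B, C a b → C b a)

/-- The relation `C#` associated to a precontact relation `C`. -/
def CSharp {B : Type*} [BooleanAlgebra B] (C : B → B → Prop) (a b : B) : Prop :=
  C a b ∨ C b a ∨ a ⊓ b ≠ ⊥

theorem stmt0 {B : Type*} [BooleanAlgebra B] {C : B → B → Prop}
    (h : IsPrecontactRel C) : IsContactRel (CSharp C) := by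
  obtain ⟨h0, hr, hl⟩ := h
  have hinf : ∀ a b : B, a ⊓ b ≠ ⊥ → a ≠ ⊥ ∧ b ≠ ⊥ := by
    rintro a b hab
    constructor <;> rintro rfl <;> simp at hab
  have hsup : ∀ x y : B, x ⊔ y ≠ ⊥ ↔ x ≠ ⊥ ∨ y ≠ ⊥ := by
    intro x y; rw [Ne, sup_eq_bot_iff]; tauto
  refine ⟨⟨?_, ?_, ?_⟩, ?_, ?_⟩
  · rintro a b (hab | hab | hab)
    · exact h0 a b hab
    · exact (h0 b a hab).symm
    · exact hinf a b hab
  · intro a b c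
    unfold CSharp
    rw [hr, hl, inf_sup_left, hsup]
    tauto
  · intro a b c
    unfold CSharp
    rw [hr, hl, inf_sup_right, hsup]
    tauto
  · intro a ha
    exact Or.inr (Or.inr (by simpa using ha))
  · rintro a b (h1|h1|h1)
    · exact Or.inr (Or.inl h1)
    · exact Or.inl h1
    · exact Or.inr (Or.inr (by rwa [inf_comm]))
end

section
/- Let (W,R) be an adjacency space and C_R the induced precontact relation on 2^W. Then C_R satisfies the transitivity axiom (Ctr) if and only if R is a transitive relation on W. -/
/-- The precontact relation `C_R` on the powerset Boolean algebra of an adjacency space `(W,R)`. -/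
def AdjC {W : Type*} (R : W → W → Prop) (M N : Set W) : Prop :=
  ∃ x ∈ M, ∃ y ∈ N, R x y

/-- The non-tangential inclusion `≪_C` associated to a (pre)contact relation `C`:
`a ≪_C b` iff `¬ C a bᶜ`. -/
def Ltc {B : Type*} [BooleanAlgebra B] (C : B → B → Prop) (a b : B) : Prop :=
  ¬ C a bᶜ

/-- Axiom (Ctr): if `a ≪_C c` then there exists `b` with `a ≪_C b ≪_C c`. -/
def SatisfiesCtr {B : Type*} [BooleanAlgebra B] (C : B → B → Prop) : Prop :=
  ∀ a c : B, Ltc C a c → ∃ b : B, Ltc C a b ∧ Ltc C b c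

theorem stmt3 {W : Type*} [Nonempty W] (R : W → W → Prop) :
    SatisfiesCtr (AdjC R) ↔ Transitive R := by
  constructor
  · intro h x y z hxy hyz
    have hac : Ltc (AdjC R) {x} {w | R x w} := by
      rintro ⟨u, hu, v, hv, huv⟩
      rcases hu with rfl
      exact hv huv
    obtain ⟨b, h1, h2⟩ := h _ _ hac
    have hyb : y ∈ b := by
      by_contra hyb
      exact h1 ⟨x, rfl, y, hyb, hxy⟩
    by_contra hxz
    exact h2 ⟨y, hyb, z, hxz, hyz⟩
  · intro htr a c hac
    refine ⟨{v | ∃ u ∈ a, R u v}, ?_, ?_⟩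
    · rintro ⟨u, hu, v, hv, huv⟩
      exact hv ⟨u, hu, huv⟩
    · rintro ⟨u, ⟨w, hw, hwu⟩, v, hv, huv⟩
      exact hac ⟨w, hw, v, hv, htr hwu huv⟩
end

section
/- Let (B,C) be a precontact algebra, let (X,T) = S(B) be the Stone space of B (points are ultrafilters of B, with the sets s_B(a) = {u : a ∈ u} forming a closed base and open base), and define the relation R on X by u R v iff u × v ⊆ C (i.e. for all a ∈ u and b ∈ v, a C b). Then the Stone map s_B : B → CO(X) is a PCA-isomorphism from (B,C) onto the canonical precontact algebra (CO(X), C_R), where for clopen F, G one sets F C_R G iff there exist x ∈ F, y ∈ G with x R y. Moreover, C satisfies axiom (Cref) (respectively (Csym), (Ctr)) if and only if the relation R is reflexive (respectively symmetric, transitive). -/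
/-- A (proper) filter of a Boolean algebra, as a set of its elements. -/
def IsBAFilter {B : Type*} [BooleanAlgebra B] (F : Set B) : Prop :=
  F.Nonempty ∧ ⊥ ∉ F ∧ (∀ a ∈ F, ∀ b : B, a ≤ b → b ∈ F) ∧
    (∀ a ∈ F, ∀ b ∈ F, a ⊓ b ∈ F)

/-- An ultrafilter of a Boolean algebra: a maximal proper filter. -/
def IsBAUltrafilter {B : Type*} [BooleanAlgebra B] (U : Set B) : Prop :=
  IsBAFilter U ∧ ∀ V : Set B, IsBAFilter V → U ⊆ V → V = U

/-- The points of the Stone space of a Boolean algebra: its ultrafilters. -/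
def StonePts (B : Type*) [BooleanAlgebra B] := {u : Set B // IsBAUltrafilter u}

/-- The Stone map `s_B`. -/
def stoneMap {B : Type*} [BooleanAlgebra B] (a : B) : Set (StonePts B) :=
  {u : StonePts B | a ∈ u.1}

/-- The Stone topology: the sets `s_B a` form an open base (and a closed base). -/
instance stoneTop (B : Type*) [BooleanAlgebra B] : TopologicalSpace (StonePts B) :=
  TopologicalSpace.generateFrom {U : Set (StonePts B) | ∃ a : B, U = stoneMap a}

/-- The canonical adjacency relation `R_(B,C)` between ultrafilters. -/
def stoneR {B : Type*} [BooleanAlgebra B] (C : B → B → Prop)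
    (u v : StonePts B) : Prop :=
  ∀ a ∈ u.1, ∀ b ∈ v.1, C a b

/-- The precontact relation induced by a relation `R` on the points of a space,
restricted here to arbitrary sets of points. -/
def PtC {W : Type*} (R : W → W → Prop) (M N : Set W) : Prop :=
  ∃ x ∈ M, ∃ y ∈ N, R x y

/-!
Ultrafilters arise as complements of maximal ideals, so an element outside an ideal `I` lies in an
ultrafilter disjoint from `I`. For a precontact relation `C` and a nonempty `⊓`-closed set `F`,
`{y | ∃ x ∈ F, ¬ C x y}` is an ideal, and an ultrafilter `v` avoiding it satisfies `x C y` for all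
`x ∈ F`, `y ∈ v`. Taking `F = {a}`, and then `F = v` for the converse relation, turns `a C b` into
ultrafilters `u ∋ a`, `v ∋ b` with `u R v`. If (Ctr) fails at `a ≪ c`, the ideal generated by
`{y | ¬ C a y}` and `{y | ¬ C y cᶜ}` is proper, and an ultrafilter avoiding it is the middle of a
chain `u R v R w` with `a ∈ u` and `cᶜ ∈ w`, so `R` is not transitive.
-/

section

variable {B : Type*} [BooleanAlgebra B]

namespace IsBAUltrafilter

variable {u : Set B}

theorem top_mem (hu : IsBAUltrafilter u) : (⊤ : B) ∈ u := by
  obtain ⟨a, ha⟩ := hu.1.1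
  exact hu.1.2.2.1 a ha ⊤ le_top

theorem bot_notMem (hu : IsBAUltrafilter u) : (⊥ : B) ∉ u :=
  hu.1.2.1

theorem mem_of_le (hu : IsBAUltrafilter u) {a b : B} (ha : a ∈ u) (hab : a ≤ b) : b ∈ u :=
  hu.1.2.2.1 a ha b hab

theorem inf_mem (hu : IsBAUltrafilter u) {a b : B} (ha : a ∈ u) (hb : b ∈ u) : a ⊓ b ∈ u :=
  hu.1.2.2.2 a ha b hb

theorem inf_mem_iff (hu : IsBAUltrafilter u) {a b : B} : a ⊓ b ∈ u ↔ a ∈ u ∧ b ∈ u :=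
  ⟨fun hab => ⟨hu.mem_of_le hab inf_le_left, hu.mem_of_le hab inf_le_right⟩,
    fun hab => hu.inf_mem hab.1 hab.2⟩

theorem infClosed (hu : IsBAUltrafilter u) : InfClosed u :=
  fun _ ha _ hb => hu.inf_mem ha hb

theorem compl_mem_iff (hu : IsBAUltrafilter u) {a : B} : aᶜ ∈ u ↔ a ∉ u := by
  refine ⟨fun hac ha => hu.bot_notMem (by simpa using hu.inf_mem ha hac), fun ha => ?_⟩
  by_contra hac
  -- the filter generated by `u` and `a` is proper, so maximality forces it to be `u`
  set V : Set B := {w | ∃ x ∈ u, x ⊓ a ≤ w}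
  have hV : IsBAFilter V := by
    refine ⟨⟨a, ⊤, hu.top_mem, inf_le_right⟩, ?_, ?_, ?_⟩
    · rintro ⟨x, hx, hxa⟩
      exact hac (hu.mem_of_le hx (le_compl_iff_disjoint_right.2 (disjoint_iff_inf_le.2 hxa)))
    · rintro w ⟨x, hx, hxw⟩ w' hww'
      exact ⟨x, hx, hxw.trans hww'⟩
    · rintro w ⟨x, hx, hxw⟩ w' ⟨x', hx', hxw'⟩
      refine ⟨x ⊓ x', hu.inf_mem hx hx', le_inf ?_ ?_⟩
      · exact le_trans (inf_le_inf_right a inf_le_left) hxw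
      · exact le_trans (inf_le_inf_right a inf_le_right) hxw'
  have hVu : V = u := hu.2 V hV fun x hx => ⟨x, hx, inf_le_left⟩
  exact ha (hVu ▸ ⟨⊤, hu.top_mem, inf_le_right⟩)

theorem sup_mem_iff (hu : IsBAUltrafilter u) {a b : B} : a ⊔ b ∈ u ↔ a ∈ u ∨ b ∈ u := by
  rw [← compl_compl (a ⊔ b), hu.compl_mem_iff, compl_sup, hu.inf_mem_iff, hu.compl_mem_iff,
    hu.compl_mem_iff]
  tauto

theorem of_inf_compl (hinf : ∀ a b : B, a ⊓ b ∈ u ↔ a ∈ u ∧ b ∈ u)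
    (hcompl : ∀ a : B, aᶜ ∈ u ↔ a ∉ u) : IsBAUltrafilter u := by
  have hle : ∀ a ∈ u, ∀ b : B, a ≤ b → b ∈ u := fun a ha b hab =>
    ((hinf a b).1 ((inf_eq_left.2 hab).symm ▸ ha)).2
  have hbot : (⊥ : B) ∉ u := fun h => (hcompl ⊥).1 (hle ⊥ h _ bot_le) h
  refine ⟨⟨⟨⊤, by simpa using (hcompl ⊥).2 hbot⟩, hbot, hle,
    fun a ha b hb => (hinf a b).2 ⟨ha, hb⟩⟩, fun V hV huV => ?_⟩
  refine Set.Subset.antisymm (fun x hxV => ?_) huV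
  by_contra hxu
  exact hV.2.1 (by simpa using hV.2.2.2 x hxV xᶜ (huV ((hcompl x).2 hxu)))

end IsBAUltrafilter

theorem Order.Ideal.IsPrime.isBAUltrafilter_compl {I : Order.Ideal B} (hI : I.IsPrime) :
    IsBAUltrafilter (I : Set B)ᶜ := by
  refine IsBAUltrafilter.of_inf_compl (fun a b => ?_) fun a => ?_
  · simp only [Set.mem_compl_iff, SetLike.mem_coe]
    refine ⟨fun hab => ⟨fun ha => hab (I.lower inf_le_left ha),
      fun hb => hab (I.lower inf_le_right hb)⟩, fun hab h => ?_⟩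
    rcases hI.mem_or_mem h with h | h
    exacts [hab.1 h, hab.2 h]
  · simp only [Set.mem_compl_iff, SetLike.mem_coe, not_not]
    exact ⟨hI.mem_or_compl_mem.resolve_right, fun ha => hI.toIsProper.notMem_of_compl_mem
      (by rwa [compl_compl])⟩

theorem exists_stonePt_mem_of_notMem {I : Order.Ideal B} {a : B} (ha : a ∉ I) :
    ∃ u : StonePts B, a ∈ u.1 ∧ ∀ x ∈ u.1, x ∉ I := by
  have hJ : (I ⊔ Order.Ideal.principal aᶜ).IsProper := by
    refine Order.Ideal.isProper_of_notMem (p := ⊤) fun htop => ha ?_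
    obtain ⟨j, hj, hle⟩ := (Lattice.mem_ideal_sup_principal _ _ _).1 htop
    have haj : aᶜᶜ ≤ j := codisjoint_iff_compl_le_left.1 (codisjoint_iff.2 (top_le_iff.1 hle))
    exact I.lower (by rwa [compl_compl] at haj) hj
  obtain ⟨M, hJM, hM⟩ := hJ.exists_le_maximal
  have haM : aᶜ ∈ M := hJM (Order.Ideal.mem_sup.2 ⟨⊥, I.bot_mem, aᶜ, Order.Ideal.mem_principal_self, by simp⟩)
  refine ⟨⟨(M : Set B)ᶜ, Order.Ideal.IsMaximal.isPrime.isBAUltrafilter_compl⟩,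
    hM.toIsProper.notMem_of_compl_mem haM, fun x hx hxI => hx ?_⟩
  exact hJM (Order.Ideal.mem_sup.2 ⟨x, hxI, ⊥, Order.Ideal.bot_mem _, by simp⟩)

theorem exists_stonePt_mem {a : B} (ha : a ≠ ⊥) : ∃ u : StonePts B, a ∈ u.1 := by
  obtain ⟨u, hau, -⟩ := exists_stonePt_mem_of_notMem (I := Order.Ideal.principal ⊥) (a := a)
    (by rwa [Order.Ideal.mem_principal, le_bot_iff])
  exact ⟨u, hau⟩

theorem stoneMap_inf (a b : B) : stoneMap (a ⊓ b) = stoneMap a ∩ stoneMap b :=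
  Set.ext fun u => u.2.inf_mem_iff

theorem stoneMap_sup (a b : B) : stoneMap (a ⊔ b) = stoneMap a ∪ stoneMap b :=
  Set.ext fun u => u.2.sup_mem_iff

theorem stoneMap_compl (a : B) : stoneMap aᶜ = (stoneMap a)ᶜ :=
  Set.ext fun u => u.2.compl_mem_iff

theorem stoneMap_bot : stoneMap (⊥ : B) = ∅ :=
  Set.eq_empty_of_forall_notMem fun u => u.2.bot_notMem

theorem stoneMap_top : stoneMap (⊤ : B) = Set.univ :=
  Set.eq_univ_of_forall fun u => u.2.top_mem

theorem stoneMap_subset_stoneMap {a b : B} : stoneMap a ⊆ stoneMap b ↔ a ≤ b := by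
  refine ⟨fun hab => by_contra fun hnot => ?_, fun hab u ha => u.2.mem_of_le ha hab⟩
  obtain ⟨u, hu⟩ := exists_stonePt_mem (a := a ⊓ bᶜ) fun h =>
    hnot (disjoint_compl_right_iff.1 (disjoint_iff.2 h))
  change u ∈ stoneMap (a ⊓ bᶜ) at hu
  rw [stoneMap_inf, stoneMap_compl] at hu
  exact hu.2 (hab hu.1)

theorem stoneMap_injective : Function.Injective (stoneMap (B := B)) := fun _ _ hab =>
  le_antisymm (stoneMap_subset_stoneMap.1 hab.le) (stoneMap_subset_stoneMap.1 hab.ge)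

theorem isTopologicalBasis_stoneMap :
    TopologicalSpace.IsTopologicalBasis {U : Set (StonePts B) | ∃ a : B, U = stoneMap a} := by
  refine ⟨?_, ?_, rfl⟩
  · rintro _ ⟨a, rfl⟩ _ ⟨b, rfl⟩ u hu
    exact ⟨stoneMap (a ⊓ b), ⟨a ⊓ b, rfl⟩, by rwa [stoneMap_inf], (stoneMap_inf a b).le⟩
  · exact Set.sUnion_eq_univ_iff.2 fun u => ⟨stoneMap ⊤, ⟨⊤, rfl⟩, u.2.top_mem⟩

theorem isClopen_stoneMap (a : B) : IsClopen (stoneMap a) := by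
  refine ⟨?_, isTopologicalBasis_stoneMap.isOpen ⟨a, rfl⟩⟩
  rw [← isOpen_compl_iff, ← stoneMap_compl]
  exact isTopologicalBasis_stoneMap.isOpen ⟨aᶜ, rfl⟩

instance : CompactSpace (StonePts B) := by
  refine isCompact_univ_iff.1 (isCompact_iff_ultrafilter_le_nhds.2 fun 𝒰 _ => ?_)
  have hu : IsBAUltrafilter {a : B | stoneMap a ∈ 𝒰} := IsBAUltrafilter.of_inf_compl
    (fun a b => by
      change stoneMap (a ⊓ b) ∈ 𝒰 ↔ _
      rw [stoneMap_inf]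
      exact Filter.inter_mem_iff)
    (fun a => by simp [stoneMap_compl, Ultrafilter.compl_mem_iff_notMem])
  refine ⟨⟨_, hu⟩, Set.mem_univ _, (isTopologicalBasis_stoneMap.nhds_hasBasis).ge_iff.2 ?_⟩
  rintro _ ⟨⟨a, rfl⟩, ha⟩
  exact ha

theorem exists_stoneMap_eq_of_isClopen {U : Set (StonePts B)} (hU : IsClopen U) :
    ∃ a : B, U = stoneMap a := by
  have hcover : U ⊆ ⋃ a : {a : B // stoneMap a ⊆ U}, stoneMap a.1 := fun u hu => by
    obtain ⟨_, ⟨a, rfl⟩, hua, haU⟩ :=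
      isTopologicalBasis_stoneMap.exists_subset_of_mem_open hu hU.isOpen
    exact Set.mem_iUnion.2 ⟨⟨a, haU⟩, hua⟩
  have : Nonempty {a : B // stoneMap a ⊆ U} := ⟨⟨⊥, by simp [stoneMap_bot]⟩⟩
  have hdir : Directed (· ⊆ ·) fun a : {a : B // stoneMap a ⊆ U} => stoneMap a.1 := by
    intro a b
    exact ⟨⟨a.1 ⊔ b.1, by simpa [stoneMap_sup] using ⟨a.2, b.2⟩⟩,
      by simp [stoneMap_sup], by simp [stoneMap_sup]⟩
  obtain ⟨a, ha⟩ := hU.isClosed.isCompact.elim_directed_cover _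
    (fun a : {a : B // stoneMap a ⊆ U} => (isClopen_stoneMap a.1).isOpen) hcover hdir
  exact ⟨a.1, ha.antisymm a.2⟩

namespace IsPrecontactRel

variable {C : B → B → Prop}

theorem mono (h : IsPrecontactRel C) {a a' b b' : B} (ha : a ≤ a') (hb : b ≤ b') (hab : C a b) :
    C a' b' := by
  have ha' : C a' b := by simpa [sup_eq_right.2 ha] using (h.2.2 a a' b).2 (Or.inl hab)
  simpa [sup_eq_right.2 hb] using (h.2.1 a' b b').2 (Or.inl ha')

protected theorem flip (h : IsPrecontactRel C) : IsPrecontactRel (flip C) :=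
  ⟨fun a b hab => (h.1 b a hab).symm, fun a b c => h.2.2 b c a, fun a b c => h.2.1 c a b⟩

theorem isIdeal_setOf_exists_not (h : IsPrecontactRel C) {F : Set B} (hne : F.Nonempty)
    (hF : InfClosed F) : Order.IsIdeal {y | ∃ x ∈ F, ¬ C x y} := by
  refine ⟨fun y y' hy'y ⟨x, hx, hxy⟩ => ⟨x, hx, fun hC => hxy (h.mono le_rfl hy'y hC)⟩, ?_,
    SupClosed.directedOn ?_⟩
  · obtain ⟨x, hx⟩ := hne
    exact ⟨⊥, x, hx, fun hC => (h.1 _ _ hC).2 rfl⟩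
  · rintro y ⟨x, hx, hxy⟩ y' ⟨x', hx', hxy'⟩
    refine ⟨x ⊓ x', hF hx hx', fun hC => ?_⟩
    rcases (h.2.1 _ _ _).1 hC with hC | hC
    exacts [hxy (h.mono inf_le_left le_rfl hC), hxy' (h.mono inf_le_right le_rfl hC)]

theorem exists_stonePt_forall_contact (h : IsPrecontactRel C) {F : Set B} (hne : F.Nonempty)
    (hF : InfClosed F) {b : B} (hb : ∀ x ∈ F, C x b) :
    ∃ v : StonePts B, b ∈ v.1 ∧ ∀ x ∈ F, ∀ y ∈ v.1, C x y := by
  obtain ⟨v, hbv, hv⟩ := exists_stonePt_mem_of_notMem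
    (I := (h.isIdeal_setOf_exists_not hne hF).toIdeal) (a := b) fun ⟨x, hx, hxb⟩ => hxb (hb x hx)
  exact ⟨v, hbv, fun x hx y hy => by_contra fun hxy => hv y hy ⟨x, hx, hxy⟩⟩

theorem exists_mem_stoneR_left (h : IsPrecontactRel C) (v : StonePts B) {a : B}
    (ha : ∀ y ∈ v.1, C a y) : ∃ u : StonePts B, a ∈ u.1 ∧ stoneR C u v := by
  obtain ⟨u, hau, hu⟩ := h.flip.exists_stonePt_forall_contact ⟨⊤, v.2.top_mem⟩ v.2.infClosed ha
  exact ⟨u, hau, fun x hx y hy => hu y hy x hx⟩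

theorem exists_mem_stoneR_right (h : IsPrecontactRel C) (u : StonePts B) {b : B}
    (hb : ∀ x ∈ u.1, C x b) : ∃ v : StonePts B, b ∈ v.1 ∧ stoneR C u v :=
  h.exists_stonePt_forall_contact ⟨⊤, u.2.top_mem⟩ u.2.infClosed hb

theorem contact_iff_ptC_stoneR (h : IsPrecontactRel C) {a b : B} :
    C a b ↔ PtC (stoneR C) (stoneMap a) (stoneMap b) := by
  refine ⟨fun hab => ?_, fun ⟨u, hau, v, hbv, huv⟩ => huv a hau b hbv⟩
  obtain ⟨v, hbv, hv⟩ := h.exists_stonePt_forall_contact (Set.singleton_nonempty a)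
    infClosed_singleton (by simpa using hab)
  obtain ⟨u, hau, huv⟩ := h.exists_mem_stoneR_left v (hv a rfl)
  exact ⟨u, hau, v, hbv, huv⟩

theorem reflexive_stoneR_iff (h : IsPrecontactRel C) :
    Reflexive (stoneR C) ↔ ∀ a : B, a ≠ ⊥ → C a a := by
  refine ⟨fun hR a ha => ?_, fun href u a ha b hb => ?_⟩
  · obtain ⟨u, hau⟩ := exists_stonePt_mem ha
    exact hR u a hau a hau
  · have hab : a ⊓ b ≠ ⊥ := fun hbot => u.2.bot_notMem (hbot ▸ u.2.inf_mem ha hb)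
    exact h.mono inf_le_left inf_le_right (href _ hab)

theorem symmetric_stoneR_iff (h : IsPrecontactRel C) :
    Symmetric (stoneR C) ↔ ∀ a b : B, C a b → C b a := by
  refine ⟨fun hR a b hab => ?_, fun hsym u v huv a ha b hb => hsym b a (huv b hb a ha)⟩
  obtain ⟨u, hau, v, hbv, huv⟩ := h.contact_iff_ptC_stoneR.1 hab
  exact hR huv b hbv a hau

theorem exists_stonePt_contact_between (h : IsPrecontactRel C) {a c : B}
    (hac : ¬ ∃ b, Ltc C a b ∧ Ltc C b c) : ∃ v : StonePts B, ∀ y ∈ v.1, C a y ∧ C y cᶜ := by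
  let I := (h.isIdeal_setOf_exists_not (Set.singleton_nonempty a) infClosed_singleton).toIdeal ⊔
    (h.flip.isIdeal_setOf_exists_not (Set.singleton_nonempty cᶜ) infClosed_singleton).toIdeal
  -- `⊤ ≤ y ⊔ b` with `¬ C a y` and `¬ C b cᶜ` would make `b` interpolate between `a` and `c`
  have htop : ⊤ ∉ I := by
    rintro hI
    obtain ⟨y, ⟨_, rfl, hay⟩, b, ⟨_, rfl, hbc⟩, hyb⟩ := Order.Ideal.mem_sup.1 hI
    have hby : bᶜ ≤ y := codisjoint_iff_compl_le_left.1 (codisjoint_iff.2 (top_le_iff.1 hyb))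
    exact hac ⟨b, fun hab => hay (h.mono le_rfl hby hab), hbc⟩
  obtain ⟨v, -, hv⟩ := exists_stonePt_mem_of_notMem htop
  refine ⟨v, fun y hy => ⟨by_contra fun hay => hv y hy ?_, by_contra fun hyc => hv y hy ?_⟩⟩
  · exact Order.Ideal.mem_sup.2 ⟨y, ⟨a, rfl, hay⟩, ⊥, Order.Ideal.bot_mem _, by simp⟩
  · exact Order.Ideal.mem_sup.2 ⟨⊥, Order.Ideal.bot_mem _, y, ⟨cᶜ, rfl, hyc⟩, by simp⟩

theorem transitive_stoneR_iff (h : IsPrecontactRel C) :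
    Transitive (stoneR C) ↔ SatisfiesCtr C := by
  refine ⟨fun hR a c hac => by_contra fun hno => ?_, fun hctr u v w huv hvw a ha c hc => ?_⟩
  · obtain ⟨v, hv⟩ := h.exists_stonePt_contact_between hno
    obtain ⟨u, hau, huv⟩ := h.exists_mem_stoneR_left v fun y hy => (hv y hy).1
    obtain ⟨w, hcw, hvw⟩ := h.exists_mem_stoneR_right v fun y hy => (hv y hy).2
    exact hac (hR huv hvw a hau cᶜ hcw)
  · by_contra hac
    obtain ⟨b, hab, hbc⟩ := hctr a cᶜ (by rwa [Ltc, compl_compl])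
    rw [Ltc, compl_compl] at hbc
    rcases em (b ∈ v.1) with hbv | hbv
    · exact hbc (hvw b hbv c hc)
    · exact hab (huv a ha bᶜ (v.2.compl_mem_iff.2 hbv))

end IsPrecontactRel

end

theorem stmt6 {B : Type*} [BooleanAlgebra B] {C : B → B → Prop}
    (h : IsPrecontactRel C) :
    -- the Stone map is a Boolean isomorphism onto the clopen algebra of `S(B)`
    (∀ a : B, IsClopen (stoneMap a)) ∧
    Function.Injective (stoneMap (B := B)) ∧
    (∀ U : Set (StonePts B), IsClopen U → ∃ a : B, U = stoneMap a) ∧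
    (∀ a b : B, stoneMap (a ⊔ b) = stoneMap a ∪ stoneMap b) ∧
    (∀ a b : B, stoneMap (a ⊓ b) = stoneMap a ∩ stoneMap b) ∧
    (∀ a : B, stoneMap aᶜ = (stoneMap a)ᶜ) ∧
    (stoneMap (⊥ : B) = ∅) ∧ (stoneMap (⊤ : B) = Set.univ) ∧
    -- it is a PCA-isomorphism onto `(CO(S(B)), C_R)`
    (∀ a b : B, C a b ↔ PtC (stoneR C) (stoneMap a) (stoneMap b)) ∧
    -- (Cref)/(Csym)/(Ctr) correspond to reflexivity/symmetry/transitivity of `R`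
    ((∀ a : B, a ≠ ⊥ → C a a) ↔ Reflexive (stoneR C)) ∧
    ((∀ a b : B, C a b → C b a) ↔ Symmetric (stoneR C)) ∧
    (SatisfiesCtr C ↔ Transitive (stoneR C)) :=
  ⟨isClopen_stoneMap, stoneMap_injective, fun _ hU => exists_stoneMap_eq_of_isClopen hU,
    stoneMap_sup, stoneMap_inf, stoneMap_compl, stoneMap_bot, stoneMap_top,
    fun _ _ => h.contact_iff_ptC_stoneR, h.reflexive_stoneR_iff.symm, h.symmetric_stoneR_iff.symm,
    h.transitive_stoneR_iff.symm⟩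
end

section
/- Let (X,X₀) be a topological pair, i.e. X₀ is a dense subspace of X, and let RC(X,X₀) = {cl_X(A) : A ∈ CO(X₀)}. Then RC(X,X₀) ⊆ RC(X); RC(X,X₀) with the restricted Boolean operations of RC(X) is a Boolean subalgebra of RC(X); RC(X,X₀) is isomorphic as a Boolean algebra to CO(X₀); RC(X,X₀) = RC(X) if and only if X₀ is extremally disconnected; and the restriction C_{(X,X₀)} of the contact relation C_X (F C_X G iff F ∩ G ≠ ∅) to RC(X,X₀) makes (RC(X,X₀), C_{(X,X₀)}) a contact subalgebra of (RC(X), C_X). -/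
open TopologicalSpace

/-- A set is regular closed if it equals the closure of its interior. -/
def IsRC {X : Type*} [TopologicalSpace X] (F : Set X) : Prop :=
  F = closure (interior F)

/-- For a clopen subset `A` of the subspace `X₀`, its closure `cl_X A` in the ambient space. -/
def embCl {X : Type*} [TopologicalSpace X] (X₀ : Set X) (A : Clopens ↥X₀) : Set X :=
  closure (Subtype.val '' (A : Set ↥X₀))

/-- `RC(X,X₀) = {cl_X A : A ∈ CO(X₀)}`. -/
def RCPair {X : Type*} [TopologicalSpace X] (X₀ : Set X) : Set (Set X) :=
  {F : Set X | ∃ A : Clopens ↥X₀, F = embCl X₀ A}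

section Helpers

variable {X : Type*} [TopologicalSpace X] {X₀ : Set X}

lemma denseClInter (hd : Dense X₀) {U : Set X} (hU : IsOpen U) :
    closure (U ∩ X₀) = closure U := by
  refine Set.Subset.antisymm (closure_mono Set.inter_subset_left) ?_
  exact closure_minimal (hd.open_subset_closure_inter hU) isClosed_closure

/-- closure of an open set is regular closed -/
lemma rcClosureOpen {U : Set X} (hU : IsOpen U) : IsRC (closure U) := by
  refine Set.Subset.antisymm ?_ ?_
  · exact closure_mono (interior_maximal subset_closure hU)
  · exact closure_mono interior_subset |>.trans (by rw [closure_closure])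

lemma existsOpenRep (A : Clopens ↥X₀) :
    ∃ U : Set X, IsOpen U ∧ Subtype.val '' (A : Set ↥X₀) = U ∩ X₀ := by
  obtain ⟨U, hU, hAU⟩ := isOpen_induced_iff.mp A.isClopen.isOpen
  exact ⟨U, hU, by rw [← hAU, Subtype.image_preimage_coe, Set.inter_comm]⟩

lemma imageEqInter (A : Clopens ↥X₀) :
    Subtype.val '' (A : Set ↥X₀) = embCl X₀ A ∩ X₀ := by
  obtain ⟨C, hC, hAC⟩ := isClosed_induced_iff.mp A.isClopen.isClosed
  have him : Subtype.val '' (A : Set ↥X₀) = C ∩ X₀ := by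
    rw [← hAC, Subtype.image_preimage_coe, Set.inter_comm]
  refine Set.Subset.antisymm (Set.subset_inter subset_closure ?_) ?_
  · exact fun x ⟨a, _, hax⟩ => hax ▸ a.2
  · have : embCl X₀ A ⊆ C := closure_minimal (him ▸ Set.inter_subset_left) hC
    rw [him]; exact Set.inter_subset_inter_left _ this

lemma imageComplEq (A : Clopens ↥X₀) :
    Subtype.val '' ((A : Set ↥X₀)ᶜ) = X₀ \ Subtype.val '' (A : Set ↥X₀) := by
  ext x
  constructor
  · rintro ⟨a, ha, rfl⟩
    refine ⟨a.2, ?_⟩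
    rintro ⟨b, hb, hba⟩
    exact ha (Subtype.val_injective hba ▸ hb)
  · rintro ⟨hx, hns⟩
    exact ⟨⟨x, hx⟩, fun h => hns ⟨⟨x, hx⟩, h, rfl⟩, rfl⟩

lemma embClEqClosure (hd : Dense X₀) (A : Clopens ↥X₀) {U : Set X} (hU : IsOpen U)
    (h : Subtype.val '' (A : Set ↥X₀) = U ∩ X₀) : embCl X₀ A = closure U := by
  rw [embCl, h, denseClInter hd hU]

lemma embClIsRC (hd : Dense X₀) (A : Clopens ↥X₀) : IsRC (embCl X₀ A) := by
  obtain ⟨U, hU, h⟩ := existsOpenRep A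
  rw [embClEqClosure hd A hU h]
  exact rcClosureOpen hU

lemma rcInterKey {U V : Set X} (hU : IsOpen U) (hV : IsOpen V) :
    closure (interior (closure U ∩ closure V)) = closure (U ∩ V) := by
  refine Set.Subset.antisymm ?_ ?_
  · refine closure_minimal ?_ isClosed_closure
    rw [interior_inter]
    calc interior (closure U) ∩ interior (closure V)
        ⊆ closure U ∩ interior (closure V) :=
          Set.inter_subset_inter_left _ interior_subset
      _ ⊆ closure (U ∩ interior (closure V)) := isOpen_interior.closure_inter
      _ ⊆ closure (closure (U ∩ V)) := by
          refine closure_mono ?_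
          refine (Set.inter_subset_inter_right _ interior_subset).trans ?_
          exact hU.inter_closure
      _ = closure (U ∩ V) := closure_closure
  · refine closure_mono (interior_maximal ?_ (hU.inter hV))
    exact Set.inter_subset_inter subset_closure subset_closure

lemma embClInj : Function.Injective (embCl X₀) := by
  intro A B h
  have : Subtype.val '' (A : Set ↥X₀) = Subtype.val '' (B : Set ↥X₀) := by
    rw [imageEqInter, imageEqInter, h]
  exact SetLike.coe_injective (Set.image_injective.mpr Subtype.val_injective this)

lemma embClSup (A B : Clopens ↥X₀) :
    embCl X₀ (A ⊔ B) = embCl X₀ A ∪ embCl X₀ B := by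
  simp only [embCl, Clopens.coe_sup, Set.image_union, closure_union]

lemma embClInf (hd : Dense X₀) (A B : Clopens ↥X₀) :
    embCl X₀ (A ⊓ B) = closure (interior (embCl X₀ A ∩ embCl X₀ B)) := by
  obtain ⟨U, hU, hA⟩ := existsOpenRep A
  obtain ⟨V, hV, hB⟩ := existsOpenRep B
  rw [embClEqClosure hd A hU hA, embClEqClosure hd B hV hB, rcInterKey hU hV]
  rw [embCl, Clopens.coe_inf, Set.image_inter Subtype.val_injective, hA, hB]
  have : U ∩ X₀ ∩ (V ∩ X₀) = (U ∩ V) ∩ X₀ := by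
    ext x; simp only [Set.mem_inter_iff]; tauto
  rw [this, denseClInter hd (hU.inter hV)]

lemma embClCompl (hd : Dense X₀) (A : Clopens ↥X₀) :
    embCl X₀ Aᶜ = closure ((embCl X₀ A)ᶜ) := by
  have hcl : IsClosed (embCl X₀ A) := isClosed_closure
  have key : Subtype.val '' ((Aᶜ : Clopens ↥X₀) : Set ↥X₀) = (embCl X₀ A)ᶜ ∩ X₀ := by
    rw [Clopens.coe_compl, imageComplEq, imageEqInter]
    ext x; simp only [Set.mem_diff, Set.mem_inter_iff, Set.mem_compl_iff]; tauto
  unfold embCl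
  rw [key, denseClInter hd hcl.isOpen_compl]
  rfl

lemma embClBot : embCl X₀ (⊥ : Clopens ↥X₀) = ∅ := by
  simp [embCl]

lemma embClTop (hd : Dense X₀) : embCl X₀ (⊤ : Clopens ↥X₀) = Set.univ := by
  have : Subtype.val '' ((⊤ : Clopens ↥X₀) : Set ↥X₀) = X₀ := by
    rw [Clopens.coe_top, Set.image_univ, Subtype.range_coe]
  rw [embCl, this, hd.closure_eq]

lemma edOfEq (hd : Dense X₀) (h : RCPair X₀ = {F : Set X | IsRC F}) :
    ExtremallyDisconnected ↥X₀ := by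
  constructor
  intro G hG
  obtain ⟨U, hU, hGU⟩ := isOpen_induced_iff.mp hG
  have hF : closure U ∈ RCPair X₀ := by rw [h]; exact rcClosureOpen hU
  obtain ⟨A, hA⟩ := hF
  have hclG : closure G = Subtype.val ⁻¹' (closure U) := by
    ext a
    rw [Set.mem_preimage, closure_subtype, ← hGU, Subtype.image_preimage_coe,
      Set.inter_comm, denseClInter hd hU]
  have hAeq : (A : Set ↥X₀) = Subtype.val ⁻¹' (closure U) := by
    have := imageEqInter A
    rw [← hA] at this
    ext a
    constructor
    · intro haA
      have : (a : X) ∈ closure U ∩ X₀ := this ▸ ⟨a, haA, rfl⟩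
      exact this.1
    · intro ha
      have : (a : X) ∈ Subtype.val '' (A : Set ↥X₀) := this ▸ ⟨ha, a.2⟩
      obtain ⟨b, hb, hba⟩ := this
      exact Subtype.val_injective hba ▸ hb
  rw [hclG, ← hAeq]
  exact A.isClopen.isOpen

lemma eqOfEd (hd : Dense X₀) [h : ExtremallyDisconnected ↥X₀]
    {F : Set X} (hF : IsRC F) : F ∈ RCPair X₀ := by
  set G : Set ↥X₀ := Subtype.val ⁻¹' (interior F) with hGdef
  have hGopen : IsOpen G := isOpen_interior.preimage continuous_subtype_val
  have hclopen : IsClopen (closure G) :=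
    ⟨isClosed_closure, ExtremallyDisconnected.open_closure G hGopen⟩
  refine ⟨⟨closure G, hclopen⟩, ?_⟩
  have hFclosed : IsClosed F := hF ▸ isClosed_closure
  have himG : Subtype.val '' G = interior F ∩ X₀ := (Subtype.image_preimage_coe _ _).trans (Set.inter_comm _ _)
  have hlow : interior F ∩ X₀ ⊆ Subtype.val '' (closure G : Set ↥X₀) := by
    rw [← himG]; exact Set.image_mono subset_closure
  have hhigh : Subtype.val '' (closure G : Set ↥X₀) ⊆ F := by
    rintro x ⟨a, ha, rfl⟩
    have : (a : X) ∈ closure (Subtype.val '' G) := closure_subtype.mp ha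
    rw [himG, denseClInter hd isOpen_interior, ← hF] at this
    exact this
  have h1 : F ⊆ embCl X₀ ⟨closure G, hclopen⟩ := by
    rw [hF, ← denseClInter hd isOpen_interior]
    exact closure_mono hlow
  have h2 : embCl X₀ ⟨closure G, hclopen⟩ ⊆ F :=
    closure_minimal hhigh hFclosed
  exact Set.Subset.antisymm h1 h2 |>.symm ▸ rfl

end Helpers

theorem stmt8 {X : Type*} [TopologicalSpace X] {X₀ : Set X} (hd : Dense X₀) :
    -- `RC(X,X₀) ⊆ RC(X)`
    (∀ F ∈ RCPair X₀, IsRC F) ∧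
    -- `RC(X,X₀)` is a Boolean subalgebra of `RC(X)`
    (∅ ∈ RCPair X₀) ∧ (Set.univ ∈ RCPair X₀) ∧
    (∀ F ∈ RCPair X₀, ∀ G ∈ RCPair X₀, F ∪ G ∈ RCPair X₀) ∧
    (∀ F ∈ RCPair X₀, ∀ G ∈ RCPair X₀, closure (interior (F ∩ G)) ∈ RCPair X₀) ∧
    (∀ F ∈ RCPair X₀, closure (Fᶜ) ∈ RCPair X₀) ∧
    -- `RC(X,X₀)` is isomorphic to the Boolean algebra `CO(X₀)` via `A ↦ cl_X A`
    Function.Injective (embCl X₀) ∧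
    (∀ A B : Clopens ↥X₀, embCl X₀ (A ⊔ B) = embCl X₀ A ∪ embCl X₀ B) ∧
    (∀ A B : Clopens ↥X₀,
      embCl X₀ (A ⊓ B) = closure (interior (embCl X₀ A ∩ embCl X₀ B))) ∧
    (∀ A : Clopens ↥X₀, embCl X₀ Aᶜ = closure ((embCl X₀ A)ᶜ)) ∧
    (embCl X₀ (⊥ : Clopens ↥X₀) = ∅) ∧ (embCl X₀ (⊤ : Clopens ↥X₀) = Set.univ) ∧
    -- `RC(X,X₀) = RC(X)` iff `X₀` is extremally disconnected
    (RCPair X₀ = {F : Set X | IsRC F} ↔ ExtremallyDisconnected ↥X₀) ∧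
    -- the restriction of `C_X` makes `RC(X,X₀)` a contact (sub)algebra
    (∀ F ∈ RCPair X₀, ∀ G ∈ RCPair X₀, (F ∩ G).Nonempty → F ≠ ∅ ∧ G ≠ ∅) ∧
    (∀ F ∈ RCPair X₀, ∀ G ∈ RCPair X₀, ∀ H ∈ RCPair X₀,
      ((F ∩ (G ∪ H)).Nonempty ↔ (F ∩ G).Nonempty ∨ (F ∩ H).Nonempty)) ∧
    (∀ F ∈ RCPair X₀, F ≠ ∅ → (F ∩ F).Nonempty) ∧
    (∀ F ∈ RCPair X₀, ∀ G ∈ RCPair X₀, (F ∩ G).Nonempty → (G ∩ F).Nonempty) := by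
  refine ⟨?_, ⟨⊥, embClBot.symm⟩, ⟨⊤, (embClTop hd).symm⟩, ?_, ?_, ?_, embClInj,
    embClSup, embClInf hd, embClCompl hd, embClBot, embClTop hd, ?_, ?_, ?_, ?_, ?_⟩
  · rintro F ⟨A, rfl⟩; exact embClIsRC hd A
  · rintro F ⟨A, rfl⟩ G ⟨B, rfl⟩
    exact ⟨A ⊔ B, (embClSup A B).symm⟩
  · rintro F ⟨A, rfl⟩ G ⟨B, rfl⟩
    exact ⟨A ⊓ B, (embClInf hd A B).symm⟩
  · rintro F ⟨A, rfl⟩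
    exact ⟨Aᶜ, (embClCompl hd A).symm⟩
  · constructor
    · exact edOfEq hd
    · intro h
      refine Set.Subset.antisymm ?_ ?_
      · rintro F ⟨A, rfl⟩; exact embClIsRC hd A
      · intro F hF; exact eqOfEd hd hF
  · rintro F - G - ⟨x, hxF, hxG⟩
    exact ⟨Set.nonempty_iff_ne_empty.mp ⟨x, hxF⟩, Set.nonempty_iff_ne_empty.mp ⟨x, hxG⟩⟩
  · rintro F - G - H -
    rw [Set.inter_union_distrib_left, Set.union_nonempty]
  · rintro F - hne
    rw [Set.inter_self]; exact Set.nonempty_iff_ne_empty.mpr hne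
  · rintro F - G - h
    rwa [Set.inter_comm]
end

section
/- (Grill Lemma.) Let B be a Boolean algebra, let F be a filter of B and G a grill of B with F ⊆ G. Then there exists an ultrafilter U of B with F ⊆ U ⊆ G. -/
/-- A grill of a Boolean algebra. -/
def IsGrill {B : Type*} [BooleanAlgebra B] (G : Set B) : Prop :=
  G.Nonempty ∧ ⊥ ∉ G ∧ (∀ a ∈ G, ∀ b : B, a ≤ b → b ∈ G) ∧
    (∀ a b : B, a ⊔ b ∈ G → a ∈ G ∨ b ∈ G)

/-- The Grill Lemma. -/
theorem stmt9 {B : Type*} [BooleanAlgebra B] {F G : Set B}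
    (hF : IsBAFilter F) (hG : IsGrill G) (hFG : F ⊆ G) :
    ∃ U : Set B, IsBAUltrafilter U ∧ F ⊆ U ∧ U ⊆ G := by
  obtain ⟨hGne, hGbot, hGup, hGsup⟩ := hG
  obtain ⟨U, hFU, hUmem⟩ :=
    zorn_subset_nonempty {F' : Set B | IsBAFilter F' ∧ F ⊆ F' ∧ F' ⊆ G}
      (fun c hcS hchain hcne => by
        refine ⟨⋃₀ c, ⟨⟨?_, ?_, ?_, ?_⟩, ?_, ?_⟩, fun s hs => Set.subset_sUnion_of_mem hs⟩
        · obtain ⟨s, hs⟩ := hcne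
          obtain ⟨x, hx⟩ := (hcS hs).1.1
          exact ⟨x, s, hs, hx⟩
        · rintro ⟨s, hs, hbot⟩
          exact (hcS hs).1.2.1 hbot
        · rintro a ⟨s, hs, ha⟩ b hab
          exact ⟨s, hs, (hcS hs).1.2.2.1 a ha b hab⟩
        · rintro a ⟨s, hs, ha⟩ b ⟨t, ht, hb⟩
          rcases hchain.total hs ht with h | h
          · exact ⟨t, ht, (hcS ht).1.2.2.2 a (h ha) b hb⟩
          · exact ⟨s, hs, (hcS hs).1.2.2.2 a ha b (h hb)⟩
        · obtain ⟨s, hs⟩ := hcne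
          exact (hcS hs).2.1.trans (Set.subset_sUnion_of_mem hs)
        · rintro x ⟨s, hs, hx⟩
          exact (hcS hs).2.2 hx)
      F ⟨hF, subset_rfl, hFG⟩
  obtain ⟨⟨hUF, hFsubU, hUG⟩, hmax⟩ := hUmem
  obtain ⟨hUne, hUbot, hUup, hUinf⟩ := hUF
  -- key: if every u ⊓ a lies in G for u ∈ U, then a ∈ U
  have key : ∀ a : B, (∀ u ∈ U, u ⊓ a ∈ G) → a ∈ U := by
    intro a ha
    set V : Set B := {b : B | ∃ u ∈ U, u ⊓ a ≤ b} with hV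
    have hVF : IsBAFilter V := by
      refine ⟨⟨a, hUne.choose, hUne.choose_spec, inf_le_right⟩, ?_, ?_, ?_⟩
      · rintro ⟨u, hu, hle⟩
        exact hGbot (le_bot_iff.mp hle ▸ ha u hu)
      · rintro b ⟨u, hu, hle⟩ c hbc
        exact ⟨u, hu, hle.trans hbc⟩
      · rintro b ⟨u, hu, hub⟩ c ⟨v, hv, hvc⟩
        exact ⟨u ⊓ v, hUinf u hu v hv, by
          refine le_inf ?_ ?_
          · exact le_trans (by gcongr; exact inf_le_left) hub
          · exact le_trans (by gcongr; exact inf_le_right) hvc⟩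
    have hVG : V ⊆ G := by
      rintro b ⟨u, hu, hle⟩
      exact hGup _ (ha u hu) b hle
    have hUV : U ⊆ V := fun u hu => ⟨u, hu, inf_le_left⟩
    have : V = U := by
      have := hmax ⟨hVF, hFsubU.trans hUV, hVG⟩ hUV
      exact le_antisymm this hUV
    rw [← this]
    exact ⟨hUne.choose, hUne.choose_spec, inf_le_right⟩
  -- dichotomy from the grill property
  have dich : ∀ a : B, (∀ u ∈ U, u ⊓ a ∈ G) ∨ (∀ u ∈ U, u ⊓ aᶜ ∈ G) := by
    intro a
    by_contra h
    push_neg at h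
    obtain ⟨⟨u, hu, hua⟩, ⟨v, hv, hva⟩⟩ := h
    have hw : u ⊓ v ∈ G := hUG (hUinf u hu v hv)
    have hle : u ⊓ v ≤ (u ⊓ a) ⊔ (v ⊓ aᶜ) := by
      have : u ⊓ v = ((u ⊓ v) ⊓ a) ⊔ ((u ⊓ v) ⊓ aᶜ) := by
        rw [← inf_sup_left, sup_compl_eq_top, inf_top_eq]
      rw [this]
      gcongr
      · exact inf_le_left
      · exact inf_le_right
    rcases hGsup _ _ (hGup _ hw _ hle) with h | h
    · exact hua h
    · exact hva h
  refine ⟨U, ⟨⟨hUne, hUbot, hUup, hUinf⟩, ?_⟩, hFsubU, hUG⟩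
  intro V hVF hUV
  by_contra hne
  obtain ⟨a, haV, haU⟩ := Set.not_subset.mp fun h => hne (le_antisymm h hUV)
  have hac : aᶜ ∈ U := by
    rcases dich a with h | h
    · exact absurd (key a h) haU
    · exact key aᶜ h
  exact hVF.2.1 (by simpa using hVF.2.2.2 a haV aᶜ (hUV hac))
end

section
/- Every C-semiregular topological space is compact. -/
/-- A clan of the standard contact algebra `(RC(X), C_X)`. -/
def IsClanRC {X : Type*} [TopologicalSpace X] (Γ : Set (Set X)) : Prop :=
  (∀ F ∈ Γ, IsRC F) ∧ Γ.Nonempty ∧ ∅ ∉ Γ ∧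
    (∀ F ∈ Γ, ∀ G : Set X, IsRC G → F ⊆ G → G ∈ Γ) ∧
    (∀ F G : Set X, IsRC F → IsRC G → F ∪ G ∈ Γ → F ∈ Γ ∨ G ∈ Γ) ∧
    (∀ F ∈ Γ, ∀ G ∈ Γ, (F ∩ G).Nonempty)

/-- A space is semiregular if its regular closed sets form a closed base. -/
def Semiregular (X : Type*) [TopologicalSpace X] : Prop :=
  ∀ U : Set X, IsOpen U → ∀ x ∈ U, ∃ F : Set X, IsRC F ∧ x ∉ F ∧ Fᶜ ⊆ U

/-- A C-semiregular space: a semiregular `T₀`-space in which every clan of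
`(RC(X), C_X)` is a point clan `σ_x`. -/
def CSemiregular (X : Type*) [TopologicalSpace X] : Prop :=
  Semiregular X ∧ T0Space X ∧
    ∀ Γ : Set (Set X), IsClanRC Γ → ∃ x : X, Γ = {F : Set X | IsRC F ∧ x ∈ F}

theorem stmt11 (X : Type*) [TopologicalSpace X] (h : CSemiregular X) :
    CompactSpace X := by
  obtain ⟨hsr, _, hclan⟩ := h
  rcases isEmpty_or_nonempty X with hX | hX
  · infer_instance
  constructor
  rw [isCompact_iff_ultrafilter_le_nhds]
  intro u _
  -- the regular closed members of u form a clan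
  set Γ : Set (Set X) := {F | IsRC F ∧ F ∈ u} with hΓ
  have hcl : IsClanRC Γ := by
    refine ⟨fun F hF => hF.1, ⟨Set.univ, ?_, u.univ_mem⟩, ?_, ?_, ?_, ?_⟩
    · simp [IsRC]
    · intro hemp
      exact u.empty_notMem hemp.2
    · intro F hF G hG hFG
      exact ⟨hG, u.mem_of_superset hF.2 hFG⟩
    · intro F G hF hG hFG
      rcases Ultrafilter.union_mem_iff.mp hFG.2 with h' | h'
      · exact Or.inl ⟨hF, h'⟩
      · exact Or.inr ⟨hG, h'⟩
    · intro F hF G hG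
      exact Ultrafilter.nonempty_of_mem (u.inter_mem hF.2 hG.2)
  obtain ⟨x, hx⟩ := hclan Γ hcl
  refine ⟨x, Set.mem_univ x, le_nhds_iff.mpr fun s hxs hs => ?_⟩
  obtain ⟨F, hFrc, hxF, hFc⟩ := hsr s hs x hxs
  have hFnot : F ∉ Γ := by
    rw [hx]
    exact fun hmem => hxF hmem.2
  have hFnotu : F ∉ u := fun hFu => hFnot ⟨hFrc, hFu⟩
  have : Fᶜ ∈ u := Ultrafilter.compl_mem_iff_notMem.mpr hFnotu
  exact u.mem_of_superset this hFc
end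

section
/- For every Stone adjacency space (X₀, R) there exists a topological space X such that the triple (X, X₀, R) is a 2-precontact space, and X is unique up to homeomorphism: if (X, X₀, R) and (X₁, X₀, R) are both 2-precontact spaces then X and X₁ are homeomorphic. Moreover, such an X is a compact semiregular T₀-space. -/
open TopologicalSpace

/-- A clan of a precontact algebra `(B,C)`. -/
def IsClan {B : Type*} [BooleanAlgebra B] (C : B → B → Prop) (Γ : Set B) : Prop :=
  Γ.Nonempty ∧ ⊥ ∉ Γ ∧ (∀ a ∈ Γ, ∀ b : B, a ≤ b → b ∈ Γ) ∧
    (∀ a b : B, a ⊔ b ∈ Γ → a ∈ Γ ∨ b ∈ Γ) ∧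
    (∀ a ∈ Γ, ∀ b ∈ Γ, CSharp C a b)

/-- The precontact relation `C_R` on `CO(X₀)` induced by an adjacency relation `R` on `X₀`. -/
def clopCR {X : Type*} [TopologicalSpace X] {X₀ : Set X}
    (R : ↥X₀ → ↥X₀ → Prop) (A B : Clopens ↥X₀) : Prop :=
  ∃ x ∈ (A : Set ↥X₀), ∃ y ∈ (B : Set ↥X₀), R x y

/-- A 2-precontact space `(X, X₀, R)`. -/
structure TwoPrecontact (X : Type*) [TopologicalSpace X] (X₀ : Set X)
    (R : ↥X₀ → ↥X₀ → Prop) : Prop where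
  /-- (PCS1): `X₀` is dense in `X` -/
  dense : Dense X₀
  /-- (PCS1): `X` is a `T₀`-space -/
  t0 : T0Space X
  /-- (PCS2): `X₀` is compact -/
  compact₀ : CompactSpace ↥X₀
  /-- (PCS2): `X₀` is Hausdorff -/
  t2₀ : T2Space ↥X₀
  /-- (PCS2): `X₀` is zero-dimensional -/
  zdim₀ : IsTopologicalBasis {s : Set ↥X₀ | IsClopen s}
  /-- (PCS2): `R` is a closed relation on `X₀` -/
  closedR : IsClosed {p : ↥X₀ × ↥X₀ | R p.1 p.2}
  /-- (PCS3): `RC(X,X₀)` is a closed base for `X` -/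
  base : ∀ U : Set X, IsOpen U → ∀ x ∈ U,
    ∃ A : Clopens ↥X₀, x ∈ (embCl X₀ A)ᶜ ∧ (embCl X₀ A)ᶜ ⊆ U
  /-- (PCS4) -/
  pcs4 : ∀ A B : Clopens ↥X₀, (embCl X₀ A ∩ embCl X₀ B).Nonempty →
    CSharp (clopCR R) A B
  /-- (PCS5): every clan of `(CO(X₀), C_R)` is of the form `Γ_{x,X₀}` -/
  pcs5 : ∀ Γ : Set (Clopens ↥X₀), IsClan (clopCR R) Γ →
    ∃ x : X, Γ = {A : Clopens ↥X₀ | x ∈ embCl X₀ A}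

universe u

/-!
A point `x` of a 2-precontact space `X` over `(X₀, R)` is determined by its clan `Γ_x`
(by (PCS3) and `T₀`), and by (PCS5) every clan is some `Γ_x`. So `x ↦ Γ_x` identifies `X`
with the space of all clans of `(CO(X₀), C_R)`, topologized by the closed base
`{Γ | A ∈ Γ}`; this space is the required extension, and any two extensions are homeomorphic.
`X` is compact because the clopens whose closures lie in an ultrafilter form a clan, whose
point is a limit of the ultrafilter, and semiregular because each `cl_X A` is the closure of an
open set.
-/

open Topology Set

section Clan

variable {B B' : Type*} [BooleanAlgebra B] [BooleanAlgebra B']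
  {C : B → B → Prop} {C' : B' → B' → Prop} {Γ : Set B}

theorem IsClan.mem_of_le (hΓ : IsClan C Γ) {a b : B} (ha : a ∈ Γ) (hab : a ≤ b) :
    b ∈ Γ :=
  hΓ.2.2.1 a ha b hab

theorem IsClan.top_mem (hΓ : IsClan C Γ) : ⊤ ∈ Γ :=
  let ⟨_, ha⟩ := hΓ.1
  hΓ.mem_of_le ha le_top

theorem IsClan.bot_notMem (hΓ : IsClan C Γ) : ⊥ ∉ Γ :=
  hΓ.2.1

theorem IsClan.mem_or_mem (hΓ : IsClan C Γ) {a b : B} (hab : a ⊔ b ∈ Γ) :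
    a ∈ Γ ∨ b ∈ Γ :=
  hΓ.2.2.2.1 a b hab

theorem IsClan.cSharp (hΓ : IsClan C Γ) {a b : B} (ha : a ∈ Γ) (hb : b ∈ Γ) :
    CSharp C a b :=
  hΓ.2.2.2.2 a ha b hb

theorem CSharp.of_orderIso (τ : B ≃o B') (hC : ∀ a b, C' (τ a) (τ b) → C a b) {a b : B}
    (h : CSharp C' (τ a) (τ b)) : CSharp C a b :=
  h.imp (hC a b) <| Or.imp (hC b a) fun hab hbot => hab <| by rw [← map_inf, hbot, map_bot]

theorem IsClan.preimage_orderIso {Γ' : Set B'} (hΓ' : IsClan C' Γ') (τ : B ≃o B')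
    (hC : ∀ a b, C' (τ a) (τ b) → C a b) : IsClan C (τ ⁻¹' Γ') := by
  obtain ⟨⟨a, ha⟩, hbot, hup, hprime, hsharp⟩ := hΓ'
  refine ⟨⟨τ.symm a, by simpa using ha⟩, by simpa using hbot,
    fun a ha b hab => hup _ ha _ (τ.monotone hab), fun a b hab => hprime _ _ ?_,
    fun a ha b hb => (hsharp _ ha _ hb).of_orderIso τ hC⟩
  simpa using hab

end Clan

def Homeomorph.clopensCongr {X Y : Type*} [TopologicalSpace X] [TopologicalSpace Y]
    (h : X ≃ₜ Y) : Clopens X ≃o Clopens Y where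
  toFun A := ⟨h.symm ⁻¹' A, A.isClopen.preimage h.symm.continuous⟩
  invFun B := ⟨h ⁻¹' B, B.isClopen.preimage h.continuous⟩
  left_inv A := Clopens.ext <| h.toEquiv.preimage_symm_preimage A
  right_inv B := Clopens.ext <| h.toEquiv.symm_preimage_preimage B
  map_rel_iff' := h.symm.surjective.preimage_subset_preimage_iff

@[simp]
theorem Homeomorph.coe_clopensCongr {X Y : Type*} [TopologicalSpace X] [TopologicalSpace Y]
    (h : X ≃ₜ Y) (A : Clopens X) : (h.clopensCongr A : Set Y) = h '' A :=
  (h.image_eq_preimage_symm A).symm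

theorem Homeomorph.image_comp_clopensCongr {X Y α : Type*} [TopologicalSpace X]
    [TopologicalSpace Y] (h : X ≃ₜ Y) (e : Y → α) (A : Clopens X) :
    (e ∘ h) '' A = e '' h.clopensCongr A := by
  rw [Homeomorph.coe_clopensCongr, image_comp]

theorem IsOpen.isRC_closure {X : Type*} [TopologicalSpace X] {U : Set X} (hU : IsOpen U) :
    IsRC (closure U) :=
  (closure_mono hU.subset_interior_closure).antisymm isClosed_closure.closure_interior_subset

section Embedding

variable {X₀ Y₀ X Y : Type*} [TopologicalSpace X₀] [TopologicalSpace Y₀]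
  [TopologicalSpace X] [TopologicalSpace Y]

/-- The relation `C_R` on `CO(X₀)`, for `R` a relation on the type `X₀` itself. -/
def clopensCR (R : X₀ → X₀ → Prop) (A B : Clopens X₀) : Prop :=
  ∃ x ∈ (A : Set X₀), ∃ y ∈ (B : Set X₀), R x y

/-- The set `Γ_{x,X₀}`, with `X₀` embedded into `X` by `e`. -/
def clanAt (e : X₀ → X) (x : X) : Set (Clopens X₀) :=
  {A | x ∈ closure (e '' A)}

@[simp]
theorem mem_clanAt {e : X₀ → X} {x : X} {A : Clopens X₀} :
    A ∈ clanAt e x ↔ x ∈ closure (e '' A) :=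
  Iff.rfl

/-- The axioms of a 2-precontact space `(X, e(X₀), R)`, stated in terms of `X₀` and the
embedding `e` rather than of the subspace `range e`. -/
structure IsTwoPrecontactEmbedding (R : X₀ → X₀ → Prop) (e : X₀ → X) : Prop where
  isEmbedding : IsEmbedding e
  denseRange : DenseRange e
  t0Space : T0Space X
  exists_clopens : ∀ U : Set X, IsOpen U → ∀ x ∈ U,
    ∃ A : Clopens X₀, x ∉ closure (e '' A) ∧ (closure (e '' A))ᶜ ⊆ U
  cSharp : ∀ A B : Clopens X₀, (closure (e '' A) ∩ closure (e '' B)).Nonempty →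
    CSharp (clopensCR R) A B
  exists_clanAt_eq : ∀ Γ, IsClan (clopensCR R) Γ → ∃ x, clanAt e x = Γ

variable {R : X₀ → X₀ → Prop} {e : X₀ → X} {R' : Y₀ → Y₀ → Prop}

theorem clopensCR_clopensCongr (h : Y₀ ≃ₜ X₀) (hR : ∀ a b, R (h a) (h b) ↔ R' a b)
    (A B : Clopens Y₀) :
    clopensCR R (h.clopensCongr A) (h.clopensCongr B) ↔ clopensCR R' A B := by
  simp only [clopensCR, Homeomorph.coe_clopensCongr, exists_mem_image, hR]

theorem clanAt_comp_homeomorph (h : Y₀ ≃ₜ X₀) (x : X) :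
    clanAt (e ∘ h) x = h.clopensCongr ⁻¹' clanAt e x := by
  ext A
  rw [mem_clanAt, Homeomorph.image_comp_clopensCongr]
  rfl

namespace IsTwoPrecontactEmbedding

theorem isClan_ultrafilter (H : IsTwoPrecontactEmbedding R e) (f : Ultrafilter X) :
    IsClan (clopensCR R) {A | closure (e '' A) ∈ f} := by
  refine ⟨⟨⊤, ?_⟩, ?_, fun A hA B hAB => f.mem_of_superset hA ?_, fun A B hAB => ?_,
    fun A hA B hB => H.cSharp A B (f.nonempty_of_mem (Filter.inter_mem hA hB))⟩
  · show closure (e '' univ) ∈ f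
    rw [image_univ, H.denseRange.closure_range]
    exact f.univ_mem
  · simp
  · exact closure_mono (image_mono hAB)
  · simpa [image_union, closure_union] using hAB

theorem isClan_clanAt (H : IsTwoPrecontactEmbedding R e) (x : X) :
    IsClan (clopensCR R) (clanAt e x) :=
  H.isClan_ultrafilter (pure x)

theorem clanAt_subset_iff_specializes (H : IsTwoPrecontactEmbedding R e) {x y : X} :
    clanAt e y ⊆ clanAt e x ↔ y ⤳ x := by
  refine ⟨fun h => specializes_iff_forall_open.2 fun U hU hxU => ?_, fun h A hA => ?_⟩
  · obtain ⟨A, hxA, hAU⟩ := H.exists_clopens U hU x hxU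
    exact hAU fun hyA => hxA (h hyA)
  · exact h.mem_closed isClosed_closure hA

theorem clanAt_injective (H : IsTwoPrecontactEmbedding R e) : Function.Injective (clanAt e) :=
  fun _ _ hxy =>
    have := H.t0Space
    ((H.clanAt_subset_iff_specializes.1 hxy.ge).antisymm
      (H.clanAt_subset_iff_specializes.1 hxy.le)).eq.symm

theorem continuous_of_clanAt_eq (H : IsTwoPrecontactEmbedding R e) {e' : X₀ → Y} {f : Y → X}
    (hf : ∀ y, clanAt e (f y) = clanAt e' y) : Continuous f := by
  refine continuous_def.2 fun U hU => isOpen_iff_forall_mem_open.2 fun y hy => ?_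
  obtain ⟨A, hyA, hAU⟩ := H.exists_clopens U hU (f y) hy
  refine ⟨(closure (e' '' A))ᶜ, fun z hz => hAU ?_, isClosed_closure.isOpen_compl, ?_⟩
  · rwa [mem_compl_iff, ← mem_clanAt, hf]
  · rwa [mem_compl_iff, ← mem_clanAt, ← hf]

theorem nonempty_homeomorph {X₁ : Type*} [TopologicalSpace X₁] {e₁ : X₀ → X₁}
    (H : IsTwoPrecontactEmbedding R e) (H₁ : IsTwoPrecontactEmbedding R e₁) :
    Nonempty (X ≃ₜ X₁) := by
  choose φ hφ using fun x => H₁.exists_clanAt_eq _ (H.isClan_clanAt x)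
  choose ψ hψ using fun y => H.exists_clanAt_eq _ (H₁.isClan_clanAt y)
  exact ⟨{ toFun := φ
           invFun := ψ
           left_inv := fun x => H.clanAt_injective (by rw [hψ, hφ])
           right_inv := fun y => H₁.clanAt_injective (by rw [hφ, hψ])
           continuous_toFun := H₁.continuous_of_clanAt_eq hφ
           continuous_invFun := H.continuous_of_clanAt_eq hψ }⟩

theorem compactSpace (H : IsTwoPrecontactEmbedding R e) : CompactSpace X := by
  refine ⟨isCompact_iff_ultrafilter_le_nhds.2 fun f _ => ?_⟩
  obtain ⟨x, hx⟩ := H.exists_clanAt_eq _ (H.isClan_ultrafilter f)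
  refine ⟨x, mem_univ x, fun U hU => ?_⟩
  obtain ⟨V, hVU, hV, hxV⟩ := mem_nhds_iff.1 hU
  obtain ⟨A, hxA, hAV⟩ := H.exists_clopens V hV x hxV
  have hA : A ∉ {A : Clopens X₀ | closure (e '' A) ∈ f} := hx ▸ hxA
  exact f.mem_of_superset (f.compl_mem_iff_notMem.2 hA) (hAV.trans hVU)

theorem isRC_closure_image (H : IsTwoPrecontactEmbedding R e) (A : Clopens X₀) :
    IsRC (closure (e '' A)) := by
  obtain ⟨U, hU, hUA⟩ := H.isEmbedding.isInducing.isOpen_iff.1 A.isOpen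
  have hcl : closure (e '' A) = closure U := by
    rw [← hUA, image_preimage_eq_inter_range]
    exact (closure_mono inter_subset_left).antisymm
      (closure_minimal (H.denseRange.open_subset_closure_inter hU) isClosed_closure)
  rw [hcl]
  exact hU.isRC_closure

theorem semiregular (H : IsTwoPrecontactEmbedding R e) : Semiregular X := fun U hU x hx =>
  let ⟨A, hxA, hAU⟩ := H.exists_clopens U hU x hx
  ⟨_, H.isRC_closure_image A, hxA, hAU⟩

theorem comp_homeomorph (H : IsTwoPrecontactEmbedding R e) (h : Y₀ ≃ₜ X₀)
    (hR : ∀ a b, R (h a) (h b) ↔ R' a b) : IsTwoPrecontactEmbedding R' (e ∘ h) where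
  isEmbedding := H.isEmbedding.comp h.isEmbedding
  denseRange := H.denseRange.comp h.surjective.denseRange H.isEmbedding.continuous
  t0Space := H.t0Space
  exists_clopens U hU x hx := by
    obtain ⟨A, hxA, hAU⟩ := H.exists_clopens U hU x hx
    refine ⟨h.clopensCongr.symm A, ?_⟩
    rw [Homeomorph.image_comp_clopensCongr, OrderIso.apply_symm_apply]
    exact ⟨hxA, hAU⟩
  cSharp A B hAB := by
    rw [Homeomorph.image_comp_clopensCongr, Homeomorph.image_comp_clopensCongr] at hAB
    exact (H.cSharp _ _ hAB).of_orderIso _ fun A B => (clopensCR_clopensCongr h hR A B).1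
  exists_clanAt_eq Γ hΓ := by
    have hC : ∀ A B, clopensCR R' (h.clopensCongr.symm A) (h.clopensCongr.symm B) →
        clopensCR R A B := fun A B hAB => by
      simpa using (clopensCR_clopensCongr h hR _ _).2 hAB
    obtain ⟨x, hx⟩ := H.exists_clanAt_eq _ (hΓ.preimage_orderIso _ hC)
    exact ⟨x, by rw [clanAt_comp_homeomorph, hx, OrderIso.preimage_symm_preimage]⟩

end IsTwoPrecontactEmbedding

end Embedding

def rangeRel {X₀ X : Type*} (e : X₀ → X) (R : X₀ → X₀ → Prop) (u v : range e) : Prop :=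
  ∃ x y : X₀, R x y ∧ e x = ↑u ∧ e y = ↑v

section TwoPrecontact

variable {X₀ X : Type*} [TopologicalSpace X₀] [TopologicalSpace X]

theorem rangeRel_toHomeomorph {e : X₀ → X} (he : IsEmbedding e) (R : X₀ → X₀ → Prop)
    (a b : X₀) : rangeRel e R (he.toHomeomorph a) (he.toHomeomorph b) ↔ R a b := by
  simp [rangeRel, he.injective.eq_iff]

theorem TwoPrecontact.isTwoPrecontactEmbedding_subtypeVal {S : Set X} {R : S → S → Prop}
    (T : TwoPrecontact X S R) : IsTwoPrecontactEmbedding R (Subtype.val : S → X) where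
  isEmbedding := IsEmbedding.subtypeVal
  denseRange := T.dense.denseRange_val
  t0Space := T.t0
  exists_clopens := T.base
  cSharp := T.pcs4
  exists_clanAt_eq Γ hΓ := (T.pcs5 Γ hΓ).imp fun _ hx => hx.symm

theorem IsTwoPrecontactEmbedding.twoPrecontact_subtypeVal {S : Set X} {R : S → S → Prop}
    [CompactSpace S] [T2Space S] [TotallyDisconnectedSpace S]
    (H : IsTwoPrecontactEmbedding R (Subtype.val : S → X))
    (hR : IsClosed {p : S × S | R p.1 p.2}) : TwoPrecontact X S R where
  dense := Subtype.range_coe (s := S) ▸ H.denseRange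
  t0 := H.t0Space
  compact₀ := ‹_›
  t2₀ := ‹_›
  zdim₀ := isTopologicalBasis_isClopen
  closedR := hR
  base := H.exists_clopens
  pcs4 := H.cSharp
  pcs5 Γ hΓ := (H.exists_clanAt_eq Γ hΓ).imp fun _ hx => hx.symm

variable {R : X₀ → X₀ → Prop} {e : X₀ → X}

theorem TwoPrecontact.isTwoPrecontactEmbedding (he : IsEmbedding e)
    (T : TwoPrecontact X (range e) (rangeRel e R)) : IsTwoPrecontactEmbedding R e :=
  T.isTwoPrecontactEmbedding_subtypeVal.comp_homeomorph he.toHomeomorph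
    (rangeRel_toHomeomorph he R)

theorem IsTwoPrecontactEmbedding.twoPrecontact_range [CompactSpace X₀] [T2Space X₀]
    (H : IsTwoPrecontactEmbedding R e) (hz : IsTopologicalBasis {s : Set X₀ | IsClopen s})
    (hR : IsClosed {p : X₀ × X₀ | R p.1 p.2}) : TwoPrecontact X (range e) (rangeRel e R) := by
  set h := H.isEmbedding.toHomeomorph
  have hRh : ∀ u v, R (h.symm u) (h.symm v) ↔ rangeRel e R u v := fun u v => by
    rw [← rangeRel_toHomeomorph H.isEmbedding R, h.apply_symm_apply, h.apply_symm_apply]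
  have he : e ∘ h.symm = Subtype.val :=
    funext fun u => congrArg Subtype.val (h.apply_symm_apply u)
  have := totallySeparatedSpace_of_t0_of_basis_clopen hz
  have := h.compactSpace
  have := h.symm.isEmbedding.t2Space
  have := h.totallyDisconnectedSpace
  refine (he ▸ H.comp_homeomorph h.symm hRh).twoPrecontact_subtypeVal ?_
  have hset : {p : range e × range e | rangeRel e R p.1 p.2} =
      Prod.map h.symm h.symm ⁻¹' {p | R p.1 p.2} := by
    ext p
    exact (hRh p.1 p.2).symm
  rw [hset]
  exact hR.preimage (h.symm.continuous.prodMap h.symm.continuous)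

end TwoPrecontact

def ClanSpace {X₀ : Type*} [TopologicalSpace X₀] (R : X₀ → X₀ → Prop) : Type _ :=
  {Γ : Set (Clopens X₀) // IsClan (clopensCR R) Γ}

namespace ClanSpace

variable {X₀ : Type*} [TopologicalSpace X₀] {R : X₀ → X₀ → Prop}

variable (R) in
def basicClosed (A : Clopens X₀) : Set (ClanSpace R) :=
  {Γ | A ∈ Γ.1}

instance : TopologicalSpace (ClanSpace R) :=
  generateFrom (range fun A => (basicClosed R A)ᶜ)

theorem isClosed_basicClosed (A : Clopens X₀) : IsClosed (basicClosed R A) :=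
  ⟨GenerateOpen.basic _ ⟨A, rfl⟩⟩

theorem basicClosed_sup (A B : Clopens X₀) :
    basicClosed R (A ⊔ B) = basicClosed R A ∪ basicClosed R B :=
  ext fun Γ => ⟨Γ.2.mem_or_mem, Or.rec (Γ.2.mem_of_le · le_sup_left)
    (Γ.2.mem_of_le · le_sup_right)⟩

theorem basicClosed_bot : basicClosed R (⊥ : Clopens X₀) = ∅ :=
  eq_empty_of_forall_notMem fun Γ => Γ.2.bot_notMem

theorem isTopologicalBasis : IsTopologicalBasis (range fun A => (basicClosed R A)ᶜ) := by
  refine ⟨?_, sUnion_eq_univ_iff.2 fun Γ => ⟨_, ⟨⊥, rfl⟩, by simp [basicClosed_bot]⟩, rfl⟩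
  rintro _ ⟨A, rfl⟩ _ ⟨B, rfl⟩ Γ hΓ
  refine ⟨_, ⟨A ⊔ B, rfl⟩, ?_, ?_⟩ <;> simp only [basicClosed_sup, compl_union]
  exacts [hΓ, subset_rfl]

variable (R) in
def ofPoint (x : X₀) : ClanSpace R :=
  ⟨{A | x ∈ A}, ⟨⊤, trivial⟩, id, fun _ hA _ hAB => hAB hA, fun _ _ => id,
    fun A hA B hB => Or.inr <| Or.inr fun h =>
      (h ▸ (⟨hA, hB⟩ : x ∈ A ⊓ B) : x ∈ (⊥ : Clopens X₀))⟩

theorem closure_image_ofPoint (A : Clopens X₀) :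
    closure (ofPoint R '' A) = basicClosed R A := by
  refine (closure_minimal ?_ (isClosed_basicClosed A)).antisymm fun Γ hΓ => ?_
  · rintro _ ⟨x, hx, rfl⟩
    exact hx
  · rw [isTopologicalBasis.mem_closure_iff]
    rintro _ ⟨B, rfl⟩ hB
    obtain ⟨x, hxA, hxB⟩ := not_subset.1 fun hAB => hB (Γ.2.mem_of_le hΓ hAB)
    exact ⟨ofPoint R x, hxB, x, hxA, rfl⟩

theorem isEmbedding_ofPoint [T0Space X₀] (hz : IsTopologicalBasis {s : Set X₀ | IsClopen s}) :
    IsEmbedding (ofPoint R) := by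
  have hclopen : {s : Set X₀ | IsClopen s} = range fun A : Clopens X₀ => (A : Set X₀)ᶜ :=
    ext fun s => ⟨fun hs => ⟨⟨sᶜ, hs.compl⟩, compl_compl s⟩, by
      rintro ⟨A, rfl⟩
      exact A.isClopen.compl⟩
  refine IsInducing.isEmbedding ⟨hz.eq_generateFrom.trans ?_⟩
  change _ = induced _ (generateFrom _)
  rw [induced_generateFrom_eq, ← range_comp, hclopen]
  rfl

theorem denseRange_ofPoint : DenseRange (ofPoint R) := by
  rw [DenseRange, dense_iff_closure_eq, ← image_univ, ← Clopens.coe_top, closure_image_ofPoint]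
  exact eq_univ_of_forall fun Γ => Γ.2.top_mem

instance : T0Space (ClanSpace R) :=
  ⟨fun _ _ h => Subtype.ext <| ext fun A => h.mem_closed_iff (isClosed_basicClosed A)⟩

theorem isTwoPrecontactEmbedding_ofPoint [T0Space X₀]
    (hz : IsTopologicalBasis {s : Set X₀ | IsClopen s}) :
    IsTwoPrecontactEmbedding R (ofPoint R) where
  isEmbedding := isEmbedding_ofPoint hz
  denseRange := denseRange_ofPoint
  t0Space := inferInstance
  exists_clopens U hU Γ hΓ := by
    obtain ⟨_, ⟨A, rfl⟩, hΓA, hAU⟩ := isTopologicalBasis.exists_subset_of_mem_open hΓ hU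
    exact ⟨A, by rwa [closure_image_ofPoint], by rwa [closure_image_ofPoint]⟩
  cSharp A B := by
    rintro ⟨Γ, hA, hB⟩
    rw [closure_image_ofPoint] at hA hB
    exact Γ.2.cSharp hA hB
  exists_clanAt_eq Γ hΓ := by
    refine ⟨⟨Γ, hΓ⟩, ext fun A => ?_⟩
    change _ ∈ closure _ ↔ _
    rw [closure_image_ofPoint]
    rfl

end ClanSpace

theorem stmt17 {X₀ : Type u} [TopologicalSpace X₀] [CompactSpace X₀] [T2Space X₀]
    (hz : IsTopologicalBasis {s : Set X₀ | IsClopen s})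
    (R : X₀ → X₀ → Prop) (hR : IsClosed {p : X₀ × X₀ | R p.1 p.2}) :
    -- existence
    (∃ (X : Type u) (_ : TopologicalSpace X) (e : X₀ → X), Topology.IsEmbedding e ∧
      TwoPrecontact X (Set.range e)
        (fun u v => ∃ x y : X₀, R x y ∧ e x = ↑u ∧ e y = ↑v)) ∧
    -- every such `X` is a compact semiregular `T₀`-space
    (∀ (X : Type u) (_ : TopologicalSpace X) (e : X₀ → X), Topology.IsEmbedding e →
      TwoPrecontact X (Set.range e)
        (fun u v => ∃ x y : X₀, R x y ∧ e x = ↑u ∧ e y = ↑v) →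
      CompactSpace X ∧ Semiregular X ∧ T0Space X) ∧
    -- uniqueness up to homeomorphism
    (∀ (X : Type u) (_ : TopologicalSpace X) (e : X₀ → X), Topology.IsEmbedding e →
      TwoPrecontact X (Set.range e)
        (fun u v => ∃ x y : X₀, R x y ∧ e x = ↑u ∧ e y = ↑v) →
      ∀ (X₁ : Type u) (_ : TopologicalSpace X₁) (e₁ : X₀ → X₁), Topology.IsEmbedding e₁ →
        TwoPrecontact X₁ (Set.range e₁)
          (fun u v => ∃ x y : X₀, R x y ∧ e₁ x = ↑u ∧ e₁ y = ↑v) →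
        Nonempty (X ≃ₜ X₁)) := by
  refine ⟨⟨ClanSpace R, inferInstance, ClanSpace.ofPoint R, ClanSpace.isEmbedding_ofPoint hz,
    (ClanSpace.isTwoPrecontactEmbedding_ofPoint hz).twoPrecontact_range hz hR⟩, ?_, ?_⟩
  · intro X _ e he T
    have H := T.isTwoPrecontactEmbedding he
    exact ⟨H.compactSpace, H.semiregular, H.t0Space⟩
  · intro X _ e he T X₁ _ e₁ he₁ T₁
    exact (T.isTwoPrecontactEmbedding he).nonempty_homeomorph (T₁.isTwoPrecontactEmbedding he₁)
end

section
/- Let X be a topological space, B a Boolean subalgebra of the Boolean algebra RC(X) of regular closed subsets of X, and x ∈ X. Then x is an u-point of the mereotopological pair (X,B) if and only if σ_x^B = {F ∈ B : x ∈ F} is an ultrafilter of the Boolean algebra B. -/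
/-- A Boolean subalgebra of the Boolean algebra `RC(X)` of regular closed sets. -/
def IsRCSubalg {X : Type*} [TopologicalSpace X] (B : Set (Set X)) : Prop :=
  (∀ F ∈ B, IsRC F) ∧ ∅ ∈ B ∧ Set.univ ∈ B ∧
    (∀ F ∈ B, ∀ G ∈ B, F ∪ G ∈ B) ∧
    (∀ F ∈ B, ∀ G ∈ B, closure (interior (F ∩ G)) ∈ B) ∧
    (∀ F ∈ B, closure (Fᶜ) ∈ B)

/-- An u-point of the mereotopological pair `(X,B)`. -/
def IsUPointOf {X : Type*} [TopologicalSpace X] (B : Set (Set X)) (x : X) : Prop :=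
  ∀ F ∈ B, ∀ G ∈ B, x ∈ F ∩ G → x ∈ closure (interior (F ∩ G))

/-- A (proper) filter of the Boolean algebra `B ⊆ RC(X)`
(whose meet operation is `F·G = cl(int(F ∩ G))`). -/
def IsFilterOn {X : Type*} [TopologicalSpace X] (B F : Set (Set X)) : Prop :=
  F ⊆ B ∧ F.Nonempty ∧ ∅ ∉ F ∧
    (∀ A ∈ F, ∀ G ∈ B, A ⊆ G → G ∈ F) ∧
    (∀ A ∈ F, ∀ G ∈ F, closure (interior (A ∩ G)) ∈ F)

/-- An ultrafilter of the Boolean algebra `B ⊆ RC(X)`: a maximal proper filter. -/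
def IsUltrafilterOn {X : Type*} [TopologicalSpace X] (B U : Set (Set X)) : Prop :=
  IsFilterOn B U ∧ ∀ V : Set (Set X), IsFilterOn B V → U ⊆ V → V = U

lemma int_inter_cl_compl {X : Type*} [TopologicalSpace X] (G : Set X) :
    interior (G ∩ closure Gᶜ) = ∅ := by
  ext y
  simp only [Set.mem_empty_iff_false, iff_false]
  intro hy
  have h1 : interior (G ∩ closure Gᶜ) ⊆ G :=
    interior_subset.trans Set.inter_subset_left
  have h2 : y ∈ closure Gᶜ := (interior_subset hy).2
  rw [mem_closure_iff] at h2
  obtain ⟨z, hz⟩ := h2 _ isOpen_interior hy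
  exact hz.2 (h1 hz.1)

theorem stmt18 {X : Type*} [TopologicalSpace X] {B : Set (Set X)}
    (hB : IsRCSubalg B) (x : X) :
    IsUPointOf B x ↔ IsUltrafilterOn B {F ∈ B | x ∈ F} := by
  obtain ⟨hRC, h0, h1, hcup, hmeet, hstar⟩ := hB
  constructor
  · intro hu
    constructor
    · refine ⟨fun F hF => hF.1, ⟨Set.univ, h1, Set.mem_univ x⟩, fun h => h.2, ?_, ?_⟩
      · intro A hA G hG hAG; exact ⟨hG, hAG hA.2⟩
      · intro A hA G hG
        exact ⟨hmeet A hA.1 G hG.1, hu A hA.1 G hG.1 ⟨hA.2, hG.2⟩⟩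
    · intro V hV hsub
      obtain ⟨hVB, _, hV0, _, hVmeet⟩ := hV
      apply Set.Subset.antisymm _ hsub
      intro G hG
      refine ⟨hVB hG, ?_⟩
      by_contra hx
      have hGB := hVB hG
      have hGc : closure (Gᶜ) ∈ B := hstar G hGB
      have hxGc : x ∈ closure (Gᶜ) := subset_closure hx
      have hv : closure (Gᶜ) ∈ V := hsub ⟨hGc, hxGc⟩
      have hm := hVmeet G hG _ hv
      rw [int_inter_cl_compl, closure_empty] at hm
      exact hV0 hm
  · intro hUf F hF G hG hx
    obtain ⟨⟨_, _, _, _, hmeetF⟩, _⟩ := hUf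
    exact (hmeetF F ⟨hF, hx.1⟩ G ⟨hG, hx.2⟩).2
end

section
/- Let (X,B) be a mereocompact T₀-space and let u(X,B) = {x ∈ X : x is an u-point of (X,B)}, endowed with the subspace topology. Then u(X,B) is a dense, zero-dimensional, compact Hausdorff subspace of X, and it is the unique dense zero-dimensional compact Hausdorff subspace X₀ of X such that RC(X,X₀) = B. Moreover, the pair (X, u(X,B)) is a 2-contact space. -/
open TopologicalSpace

/-- A 2-contact space `(X, X₀)`. -/
structure TwoContact (X : Type*) [TopologicalSpace X] (X₀ : Set X) : Prop where
  /-- `X₀` is dense in `X` -/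
  dense : Dense X₀
  /-- (CS1): `X` is a `T₀`-space -/
  t0 : T0Space X
  /-- (CS2): `X₀` is compact -/
  compact₀ : CompactSpace ↥X₀
  /-- (CS2): `X₀` is Hausdorff -/
  t2₀ : T2Space ↥X₀
  /-- (CS2): `X₀` is zero-dimensional -/
  zdim₀ : IsTopologicalBasis {s : Set ↥X₀ | IsClopen s}
  /-- (CS3): `RC(X,X₀)` is a closed base for `X` -/
  base : ∀ U : Set X, IsOpen U → ∀ x ∈ U,
    ∃ A : Clopens ↥X₀, x ∈ (embCl X₀ A)ᶜ ∧ (embCl X₀ A)ᶜ ⊆ U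
  /-- (CS4): every clan of `(CO(X₀), δ_(X,X₀))` is of the form `Γ_{x,X₀}` -/
  cs4 : ∀ Γ : Set (Clopens ↥X₀),
    IsClan (fun A B : Clopens ↥X₀ => (embCl X₀ A ∩ embCl X₀ B).Nonempty) Γ →
    ∃ x : X, Γ = {A : Clopens ↥X₀ | x ∈ embCl X₀ A}

/-- A clan of the contact algebra `(B, C_X ∩ B²)` for `B ⊆ RC(X)`. -/
def IsClanOn {X : Type*} [TopologicalSpace X] (B Γ : Set (Set X)) : Prop :=
  Γ ⊆ B ∧ Γ.Nonempty ∧ ∅ ∉ Γ ∧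
    (∀ F ∈ Γ, ∀ G ∈ B, F ⊆ G → G ∈ Γ) ∧
    (∀ F ∈ B, ∀ G ∈ B, F ∪ G ∈ Γ → F ∈ Γ ∨ G ∈ Γ) ∧
    (∀ F ∈ Γ, ∀ G ∈ Γ, (F ∩ G).Nonempty)

/-- The set of u-points of the mereotopological pair `(X,B)`. -/
def uPts (X : Type*) [TopologicalSpace X] (B : Set (Set X)) : Set X :=
  {x : X | IsUPointOf B x}


section
open Set
set_option linter.dupNamespace false
namespace Stmt19


variable {X : Type*} [TopologicalSpace X]

def mm (F G : Set X) : Set X := closure (interior (F ∩ G))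

lemma mm_def (F G : Set X) : mm F G = closure (interior F ∩ interior G) := by
  rw [mm, interior_inter]

lemma mm_subset {F G : Set X} (hF : IsClosed F) (hG : IsClosed G) : mm F G ⊆ F ∩ G := by
  have h : closure (interior (F ∩ G)) ⊆ closure (F ∩ G) := closure_mono interior_subset
  rwa [(hF.inter hG).closure_eq] at h

lemma mm_mono {F F' G G' : Set X} (h1 : F ⊆ F') (h2 : G ⊆ G') : mm F G ⊆ mm F' G' :=
  closure_mono (interior_mono (inter_subset_inter h1 h2))

lemma open_subset_int_closure {W : Set X} (hW : IsOpen W) : W ⊆ interior (closure W) :=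
  interior_maximal subset_closure hW

lemma mm_left_assoc (H H' F : Set X) :
    mm (mm H H') F = closure (interior H ∩ interior H' ∩ interior F) := by
  have hW : mm H H' = closure (interior H ∩ interior H') := mm_def H H'
  apply Set.Subset.antisymm
  · rw [mm_def, hW]
    set W := interior H ∩ interior H' with hWdef
    have hO : IsOpen (interior (closure W) ∩ interior F) := isOpen_interior.inter isOpen_interior
    have h1 : interior (closure W) ∩ interior F ⊆
        closure ((interior (closure W) ∩ interior F) ∩ W) := by
      intro x hx
      exact hO.inter_closure ⟨hx, interior_subset hx.1⟩
    have h2 : (interior (closure W) ∩ interior F) ∩ W ⊆ W ∩ interior F :=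
      fun x hx => ⟨hx.2, hx.1.2⟩
    calc closure (interior (closure W) ∩ interior F)
        ⊆ closure (closure ((interior (closure W) ∩ interior F) ∩ W)) := closure_mono h1
      _ = closure ((interior (closure W) ∩ interior F) ∩ W) := closure_closure
      _ ⊆ closure (W ∩ interior F) := closure_mono h2
  · rw [mm_def, hW]
    apply closure_mono
    intro x hx
    exact ⟨open_subset_int_closure (isOpen_interior.inter isOpen_interior) hx.1, hx.2⟩

lemma aux_mem_int_mm {H F : Set X} {x : X} (hx : x ∈ interior H ∩ interior F) :
    x ∈ interior (mm H F) := by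
  rw [mm_def]
  exact open_subset_int_closure (isOpen_interior.inter isOpen_interior) hx

lemma mm_sub3 (H H' F : Set X) : mm (mm H H') F ⊆ mm (mm H F) (mm H' F) := by
  rw [mm_left_assoc, mm_def (mm H F)]
  apply closure_mono
  intro x hx
  exact ⟨aux_mem_int_mm ⟨hx.1.1, hx.2⟩, aux_mem_int_mm ⟨hx.1.2, hx.2⟩⟩

lemma mm_union_subset {A F G : Set X} (hF : IsClosed F) :
    mm A (F ∪ G) ⊆ mm A F ∪ mm A G := by
  have key : interior (A ∩ (F ∪ G)) ⊆ mm A F ∪ mm A G := by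
    intro x hxU
    by_cases hx : x ∈ mm A F
    · exact Or.inl hx
    · refine Or.inr ?_
      rw [mm, mem_closure_iff]
      intro o ho hxo
      have hV : IsOpen (interior (A ∩ (F ∪ G)) ∩ (mm A F)ᶜ) :=
        isOpen_interior.inter isClosed_closure.isOpen_compl
      set V := interior (A ∩ (F ∪ G)) ∩ (mm A F)ᶜ with hVdef
      have hxV : x ∈ V := ⟨hxU, hx⟩
      by_cases hW : ((o ∩ V) ∩ Fᶜ).Nonempty
      · obtain ⟨z, hz⟩ := hW
        have hsub : (o ∩ V) ∩ Fᶜ ⊆ A ∩ G := by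
          intro y hy
          have hyA : y ∈ A ∩ (F ∪ G) := interior_subset hy.1.2.1
          rcases hyA.2 with h | h
          · exact absurd h hy.2
          · exact ⟨hyA.1, h⟩
        have hopen : IsOpen ((o ∩ V) ∩ Fᶜ) := (ho.inter hV).inter hF.isOpen_compl
        exact ⟨z, hz.1.1, interior_maximal hsub hopen hz⟩
      · exfalso
        rw [Set.not_nonempty_iff_eq_empty] at hW
        have hsubF : o ∩ V ⊆ F := by
          intro y hy
          by_contra hyF
          have : y ∈ (o ∩ V) ∩ Fᶜ := ⟨hy, hyF⟩
          rw [hW] at this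
          exact this
        have hAF : o ∩ V ⊆ A ∩ F := fun y hy => ⟨(interior_subset hy.2.1).1, hsubF hy⟩
        have : x ∈ mm A F :=
          subset_closure (interior_maximal hAF (ho.inter hV) ⟨hxo, hxV⟩)
        exact hxV.2 this
  calc mm A (F ∪ G) ⊆ closure (mm A F ∪ mm A G) := closure_mono key
    _ = mm A F ∪ mm A G := (isClosed_closure.union isClosed_closure).closure_eq

lemma interior_inter_closure_compl (F : Set X) : interior (F ∩ closure Fᶜ) = ∅ := by
  by_contra h
  obtain ⟨x, hx⟩ := Set.nonempty_iff_ne_empty.mpr h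
  have hxcl : x ∈ closure Fᶜ := (interior_subset hx).2
  rw [mem_closure_iff] at hxcl
  obtain ⟨y, hy⟩ := hxcl _ isOpen_interior hx
  exact hy.2 (interior_subset hy.1).1

lemma mm_compl (F : Set X) : mm F (closure Fᶜ) = ∅ := by
  rw [mm, interior_inter_closure_compl, closure_empty]

variable {X : Type*} [TopologicalSpace X] {B : Set (Set X)}

variable {X : Type*} [TopologicalSpace X] {B : Set (Set X)}

lemma rc_closed (hB : IsRCSubalg B) {F : Set X} (hF : F ∈ B) : IsClosed F := by
  have h : F = closure (interior F) := hB.1 F hF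
  rw [h]; exact isClosed_closure

lemma mm_mem (hB : IsRCSubalg B) {F G : Set X} (hF : F ∈ B) (hG : G ∈ B) : mm F G ∈ B :=
  hB.2.2.2.2.1 F hF G hG

structure BFil (B u : Set (Set X)) : Prop where
  sub : u ⊆ B
  univ_mem : Set.univ ∈ u
  not_empty : ∅ ∉ u
  up : ∀ F ∈ u, ∀ G ∈ B, F ⊆ G → G ∈ u
  meet : ∀ F ∈ u, ∀ G ∈ u, mm F G ∈ u

def BUf (B u : Set (Set X)) : Prop :=
  BFil B u ∧ ∀ F ∈ B, ∀ G ∈ B, F ∪ G ∈ u → F ∈ u ∨ G ∈ u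

lemma principal_fil (hB : IsRCSubalg B) {G : Set X} (hG : G ∈ B) (hne : G ≠ ∅) :
    BFil B {F | F ∈ B ∧ G ⊆ F} ∧ G ∈ {F | F ∈ B ∧ G ⊆ F} := by
  refine ⟨⟨fun F hF => hF.1, ⟨hB.2.2.1, Set.subset_univ G⟩, ?_, ?_, ?_⟩, hG, subset_rfl⟩
  · rintro ⟨-, h⟩
    exact hne (Set.subset_empty_iff.mp h)
  · rintro F ⟨hFB, hGF⟩ K hKB hFK
    exact ⟨hKB, hGF.trans hFK⟩
  · rintro F ⟨hFB, hGF⟩ F' ⟨hF'B, hGF'⟩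
    refine ⟨mm_mem hB hFB hF'B, ?_⟩
    have hrc : G = closure (interior G) := hB.1 G hG
    calc G = closure (interior G) := hrc
      _ ⊆ closure (interior (F ∩ F')) :=
        closure_mono (interior_mono (Set.subset_inter hGF hGF'))

lemma fext_lemma (hB : IsRCSubalg B) {u : Set (Set X)} (hu : BFil B u) {F : Set X} (hF : F ∈ B)
    (hne : ∀ H ∈ u, mm H F ≠ ∅) :
    BFil B {K | K ∈ B ∧ ∃ H ∈ u, mm H F ⊆ K} ∧ u ⊆ {K | K ∈ B ∧ ∃ H ∈ u, mm H F ⊆ K}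
      ∧ F ∈ {K | K ∈ B ∧ ∃ H ∈ u, mm H F ⊆ K} := by
  have hFself : mm Set.univ F = F := by
    rw [mm, Set.univ_inter, ← hB.1 F hF]
  refine ⟨⟨fun K hK => hK.1, ⟨hB.2.2.1, Set.univ, hu.univ_mem, Set.subset_univ _⟩, ?_, ?_, ?_⟩,
    ?_, hF, Set.univ, hu.univ_mem, le_of_eq hFself⟩
  · rintro ⟨-, H, hH, hsub⟩
    exact hne H hH (Set.subset_empty_iff.mp hsub)
  · rintro K ⟨hKB, H, hH, hsub⟩ K' hK'B hKK'
    exact ⟨hK'B, H, hH, hsub.trans hKK'⟩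
  · rintro K ⟨hKB, H, hH, hsub⟩ K' ⟨hK'B, H', hH', hsub'⟩
    refine ⟨mm_mem hB hKB hK'B, mm H H', hu.meet H hH H' hH', ?_⟩
    exact (mm_sub3 H H' F).trans (mm_mono hsub hsub')
  · intro K hK
    exact ⟨hu.sub hK, K, hK,
      (mm_subset (rc_closed hB (hu.sub hK)) (rc_closed hB hF)).trans Set.inter_subset_left⟩

lemma exists_buf (hB : IsRCSubalg B) {G : Set X} (hG : G ∈ B) (hne : G ≠ ∅) :
    ∃ u, BUf B u ∧ G ∈ u := by
  obtain ⟨hu₀, hGu₀⟩ := principal_fil hB hG hne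
  have hchains : ∀ c ⊆ {u : Set (Set X) | BFil B u ∧ G ∈ u}, IsChain (· ⊆ ·) c → c.Nonempty →
      ∃ ub ∈ {u : Set (Set X) | BFil B u ∧ G ∈ u}, ∀ s ∈ c, s ⊆ ub := by
    intro c hcS hchain hcne
    obtain ⟨u, hu⟩ := hcne
    refine ⟨⋃₀ c, ⟨⟨?_, ?_, ?_, ?_, ?_⟩, Set.mem_sUnion.mpr ⟨u, hu, (hcS hu).2⟩⟩,
      fun s hs => Set.subset_sUnion_of_mem hs⟩
    · exact Set.sUnion_subset fun v hv => (hcS hv).1.sub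
    · exact Set.mem_sUnion.mpr ⟨u, hu, (hcS hu).1.univ_mem⟩
    · rintro ⟨v, hv, h0⟩
      exact (hcS hv).1.not_empty h0
    · rintro F ⟨v, hv, hF⟩ K hKB hFK
      exact Set.mem_sUnion.mpr ⟨v, hv, (hcS hv).1.up F hF K hKB hFK⟩
    · rintro F ⟨v, hv, hF⟩ K ⟨w, hw, hK⟩
      rcases hchain.total hv hw with h | h
      · exact Set.mem_sUnion.mpr ⟨w, hw, (hcS hw).1.meet F (h hF) K hK⟩
      · exact Set.mem_sUnion.mpr ⟨v, hv, (hcS hv).1.meet F hF K (h hK)⟩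
  obtain ⟨m, hm0, hmax⟩ := zorn_subset_nonempty {u : Set (Set X) | BFil B u ∧ G ∈ u} hchains _
    ⟨hu₀, hGu₀⟩
  obtain ⟨hmfil, hGm⟩ := hmax.1
  refine ⟨m, ⟨hmfil, ?_⟩, hGm⟩
  intro F hFB K hKB hunion
  by_contra hcon
  push_neg at hcon
  obtain ⟨hFm, hKm⟩ := hcon
  have hext : ∀ L ∈ B, L ∉ m → ∃ H ∈ m, mm H L = ∅ := by
    intro L hLB hLm
    by_contra hc
    push_neg at hc
    obtain ⟨hefil, hsub, hLe⟩ := fext_lemma hB hmfil hLB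
      (fun H hH => Set.nonempty_iff_ne_empty.mp (hc H hH))
    have hmem : {K | K ∈ B ∧ ∃ H ∈ m, mm H L ⊆ K} ∈
        {u : Set (Set X) | BFil B u ∧ G ∈ u} := ⟨hefil, hsub hGm⟩
    have := hmax.2 hmem hsub
    exact hLm (this hLe)
  obtain ⟨H, hHm, hHF⟩ := hext F hFB hFm
  obtain ⟨H', hH'm, hH'K⟩ := hext K hKB hKm
  have hH'' : mm H H' ∈ m := hmfil.meet H hHm H' hH'm
  have hHc : mm H H' ⊆ H ∩ H' :=
    mm_subset (rc_closed hB (hmfil.sub hHm)) (rc_closed hB (hmfil.sub hH'm))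
  have hzero : mm (mm H H') (F ∪ K) = ∅ := by
    apply Set.subset_empty_iff.mp
    calc mm (mm H H') (F ∪ K) ⊆ mm (mm H H') F ∪ mm (mm H H') K :=
          mm_union_subset (rc_closed hB hFB)
      _ ⊆ mm H F ∪ mm H' K := Set.union_subset_union
          (mm_mono (hHc.trans Set.inter_subset_left) subset_rfl)
          (mm_mono (hHc.trans Set.inter_subset_right) subset_rfl)
      _ = ∅ := by rw [hHF, hH'K, Set.union_empty]
  have hfin := hmfil.meet _ hH'' _ hunion
  rw [hzero] at hfin
  exact hmfil.not_empty hfin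


lemma buf_not_both {u : Set (Set X)} (hu : BUf B u) {F : Set X}
    (h1 : F ∈ u) (h2 : closure Fᶜ ∈ u) : False := by
  have h := hu.1.meet F h1 _ h2
  rw [mm_compl] at h
  exact hu.1.not_empty h

lemma buf_mem_or (hB : IsRCSubalg B) {u : Set (Set X)} (hu : BUf B u) {F : Set X} (hF : F ∈ B) :
    F ∈ u ∨ closure Fᶜ ∈ u := by
  apply hu.2 F hF _ (hB.2.2.2.2.2 F hF)
  have h : F ∪ closure Fᶜ = Set.univ := by
    apply Set.eq_univ_of_univ_subset
    intro x _
    by_cases h : x ∈ F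
    · exact Or.inl h
    · exact Or.inr (subset_closure h)
  rw [h]
  exact hu.1.univ_mem

lemma buf_clan (hB : IsRCSubalg B) {u : Set (Set X)} (hu : BUf B u) : IsClanOn B u := by
  refine ⟨hu.1.sub, ⟨_, hu.1.univ_mem⟩, hu.1.not_empty, hu.1.up, hu.2, ?_⟩
  intro F hF G hG
  have hm := hu.1.meet F hF G hG
  have hne : mm F G ≠ ∅ := fun h => hu.1.not_empty (h ▸ hm)
  exact (Set.nonempty_iff_ne_empty.mpr hne).mono
    (mm_subset (rc_closed hB (hu.1.sub hF)) (rc_closed hB (hu.1.sub hG)))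

def sg (B : Set (Set X)) (x : X) : Set (Set X) := {F ∈ B | x ∈ F}

lemma upoint_buf (hB : IsRCSubalg B) {x : X} (hx : IsUPointOf B x) : BUf B (sg B x) := by
  constructor
  · exact ⟨fun F hF => hF.1, ⟨hB.2.2.1, Set.mem_univ x⟩,
      fun h => h.2,
      fun F hF G hG hsub => ⟨hG, hsub hF.2⟩,
      fun F hF G hG => ⟨mm_mem hB hF.1 hG.1, hx F hF.1 G hG.1 ⟨hF.2, hG.2⟩⟩⟩
  · intro F hF G hG hu
    rcases hu.2 with h | h
    · exact Or.inl ⟨hF, h⟩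
    · exact Or.inr ⟨hG, h⟩

lemma buf_upoint {u : Set (Set X)} {x : X} (hu : BUf B u) (h : u = sg B x) :
    IsUPointOf B x := by
  intro F hF G hG hx
  have hFu : F ∈ u := by rw [h]; exact ⟨hF, hx.1⟩
  have hGu : G ∈ u := by rw [h]; exact ⟨hG, hx.2⟩
  have hm := hu.1.meet F hFu G hGu
  rw [h] at hm
  exact hm.2

lemma buf_point (hB : IsRCSubalg B)
    (hmc : ∀ Γ : Set (Set X), IsClanOn B Γ → ∃ x : X, Γ = {F ∈ B | x ∈ F})
    {u : Set (Set X)} (hu : BUf B u) : ∃ x, x ∈ uPts X B ∧ u = sg B x := by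
  obtain ⟨x, hx⟩ := hmc u (buf_clan hB hu)
  exact ⟨x, buf_upoint hu hx, hx⟩

lemma sep_pt (hbase : ∀ U : Set X, IsOpen U → ∀ x ∈ U, ∃ F ∈ B, x ∉ F ∧ Fᶜ ⊆ U)
    (ht0 : T0Space X) {x y : X} (hxy : x ≠ y) :
    ∃ F ∈ B, (x ∈ F ∧ y ∉ F) ∨ (y ∈ F ∧ x ∉ F) := by
  haveI := ht0
  have hins : ¬ Inseparable x y := fun h => hxy h.eq
  rw [inseparable_iff_forall_isOpen] at hins
  push_neg at hins
  obtain ⟨U, hU, hne⟩ := hins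
  rcases hne with ⟨hx, hy⟩ | ⟨hx, hy⟩
  · obtain ⟨F, hFB, hxF, hFU⟩ := hbase U hU x hx
    refine ⟨F, hFB, Or.inr ⟨?_, hxF⟩⟩
    by_contra h
    exact hy (hFU h)
  · obtain ⟨F, hFB, hyF, hFU⟩ := hbase U hU y hy
    refine ⟨F, hFB, Or.inl ⟨?_, hyF⟩⟩
    by_contra h
    exact hx (hFU h)

lemma sg_inj (hbase : ∀ U : Set X, IsOpen U → ∀ x ∈ U, ∃ F ∈ B, x ∉ F ∧ Fᶜ ⊆ U)
    (ht0 : T0Space X) {x y : X} (h : sg B x = sg B y) : x = y := by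
  by_contra hxy
  obtain ⟨F, hFB, hc⟩ := sep_pt hbase ht0 hxy
  rcases hc with ⟨h1, h2⟩ | ⟨h1, h2⟩
  · have : F ∈ sg B y := by rw [← h]; exact ⟨hFB, h1⟩
    exact h2 this.2
  · have : F ∈ sg B x := by rw [h]; exact ⟨hFB, h1⟩
    exact h2 this.2

lemma preim_compl (hB : IsRCSubalg B) {F : Set X} (hF : F ∈ B) :
    (Subtype.val ⁻¹' F : Set ↥(uPts X B))ᶜ = Subtype.val ⁻¹' (closure Fᶜ) := by
  ext ⟨x, hx⟩
  have hbuf : BUf B (sg B x) := upoint_buf hB hx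
  simp only [Set.mem_compl_iff, Set.mem_preimage]
  constructor
  · intro h
    rcases buf_mem_or hB hbuf hF with h1 | h1
    · exact absurd h1.2 h
    · exact h1.2
  · intro h hF2
    exact buf_not_both hbuf ⟨hF, hF2⟩ ⟨hB.2.2.2.2.2 F hF, h⟩

lemma preim_clopen (hB : IsRCSubalg B) {F : Set X} (hF : F ∈ B) :
    IsClopen (Subtype.val ⁻¹' F : Set ↥(uPts X B)) := by
  constructor
  · exact (rc_closed hB hF).preimage continuous_subtype_val
  · rw [← isClosed_compl_iff, preim_compl hB hF]
    exact isClosed_closure.preimage continuous_subtype_val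

lemma nhds_basic (hbase : ∀ U : Set X, IsOpen U → ∀ x ∈ U, ∃ F ∈ B, x ∉ F ∧ Fᶜ ⊆ U)
    {U : Set ↥(uPts X B)} (hU : IsOpen U) {x : ↥(uPts X B)} (hxU : x ∈ U) :
    ∃ F ∈ B, (x : X) ∉ F ∧ (Subtype.val ⁻¹' F : Set ↥(uPts X B))ᶜ ⊆ U := by
  obtain ⟨V, hV, rfl⟩ := isOpen_induced_iff.mp hU
  obtain ⟨F, hFB, hxF, hFV⟩ := hbase V hV x.val hxU
  exact ⟨F, hFB, hxF, fun y hy => hFV hy⟩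

lemma dense_upts (hB : IsRCSubalg B)
    (hbase : ∀ U : Set X, IsOpen U → ∀ x ∈ U, ∃ F ∈ B, x ∉ F ∧ Fᶜ ⊆ U)
    (hmc : ∀ Γ : Set (Set X), IsClanOn B Γ → ∃ x : X, Γ = {F ∈ B | x ∈ F}) :
    Dense (uPts X B) := by
  rw [dense_iff_inter_open]
  intro U hU hne
  obtain ⟨x, hx⟩ := hne
  obtain ⟨F, hFB, hxF, hFU⟩ := hbase U hU x hx
  have hGB : closure Fᶜ ∈ B := hB.2.2.2.2.2 F hFB
  have hGne : closure Fᶜ ≠ ∅ := by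
    intro h
    have : x ∈ closure Fᶜ := subset_closure hxF
    rw [h] at this
    exact this
  obtain ⟨u, hu, hGu⟩ := exists_buf hB hGB hGne
  obtain ⟨y, hy, rfl⟩ := buf_point hB hmc hu
  refine ⟨y, hFU ?_, hy⟩
  intro hyF
  exact buf_not_both hu ⟨hFB, hyF⟩ hGu

lemma compact_upts (hB : IsRCSubalg B)
    (hbase : ∀ U : Set X, IsOpen U → ∀ x ∈ U, ∃ F ∈ B, x ∉ F ∧ Fᶜ ⊆ U)
    (hmc : ∀ Γ : Set (Set X), IsClanOn B Γ → ∃ x : X, Γ = {F ∈ B | x ∈ F}) :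
    CompactSpace ↥(uPts X B) := by
  constructor
  rw [isCompact_iff_ultrafilter_le_nhds]
  intro 𝒰 _
  have hbuf : BUf B {F | F ∈ B ∧ (Subtype.val ⁻¹' F : Set ↥(uPts X B)) ∈ 𝒰} := by
    constructor
    · refine ⟨fun F hF => hF.1, ⟨hB.2.2.1, ?_⟩, ?_, ?_, ?_⟩
      · rw [Set.preimage_univ]
        exact Filter.univ_mem
      · rintro ⟨-, h⟩
        rw [Set.preimage_empty] at h
        exact Filter.empty_notMem (𝒰 : Filter ↥(uPts X B)) h
      · rintro F ⟨hFB, hFu⟩ G hGB hsub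
        exact ⟨hGB, Filter.mem_of_superset hFu (Set.preimage_mono hsub)⟩
      · rintro F ⟨hFB, hFu⟩ G ⟨hGB, hGu⟩
        refine ⟨mm_mem hB hFB hGB, ?_⟩
        have hsub : (Subtype.val ⁻¹' (F ∩ G) : Set ↥(uPts X B)) ⊆ Subtype.val ⁻¹' (mm F G) := by
          rintro ⟨x, hx⟩ hmem
          exact hx F hFB G hGB hmem
        apply Filter.mem_of_superset _ hsub
        rw [Set.preimage_inter]
        exact Filter.inter_mem hFu hGu
    · rintro F hFB G hGB ⟨-, hu⟩
      rw [Set.preimage_union, Ultrafilter.union_mem_iff] at hu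
      rcases hu with h | h
      · exact Or.inl ⟨hFB, h⟩
      · exact Or.inr ⟨hGB, h⟩
  obtain ⟨x, hx, heq⟩ := buf_point hB hmc hbuf
  refine ⟨⟨x, hx⟩, Set.mem_univ _, ?_⟩
  intro s hs
  obtain ⟨t, hts, ht, hxt⟩ := mem_nhds_iff.mp hs
  obtain ⟨F, hFB, hxF, hsub⟩ := nhds_basic hbase ht hxt
  have hF𝒰 : (Subtype.val ⁻¹' F : Set ↥(uPts X B)) ∉ 𝒰 := by
    intro hmem
    have : F ∈ sg B x := by rw [← heq]; exact ⟨hFB, hmem⟩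
    exact hxF this.2
  have hcompl : (Subtype.val ⁻¹' F : Set ↥(uPts X B))ᶜ ∈ 𝒰 :=
    Ultrafilter.compl_mem_iff_notMem.mpr hF𝒰
  exact Filter.mem_of_superset hcompl (hsub.trans hts)

lemma t2_upts (hB : IsRCSubalg B)
    (hbase : ∀ U : Set X, IsOpen U → ∀ x ∈ U, ∃ F ∈ B, x ∉ F ∧ Fᶜ ⊆ U)
    (ht0 : T0Space X) : T2Space ↥(uPts X B) := by
  constructor
  rintro ⟨x, hx⟩ ⟨y, hy⟩ hne
  have hxy : x ≠ y := fun h => hne (Subtype.ext h)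
  obtain ⟨F, hFB, hc⟩ := sep_pt hbase ht0 hxy
  have hcl := preim_clopen (B := B) hB hFB
  rcases hc with ⟨h1, h2⟩ | ⟨h1, h2⟩
  · exact ⟨Subtype.val ⁻¹' F, (Subtype.val ⁻¹' F)ᶜ, hcl.isOpen, hcl.compl.isOpen, h1, h2,
      disjoint_compl_right⟩
  · exact ⟨(Subtype.val ⁻¹' F)ᶜ, Subtype.val ⁻¹' F, hcl.compl.isOpen, hcl.isOpen, h2, h1,
      disjoint_compl_left⟩

lemma basis_upts (hB : IsRCSubalg B)
    (hbase : ∀ U : Set X, IsOpen U → ∀ x ∈ U, ∃ F ∈ B, x ∉ F ∧ Fᶜ ⊆ U) :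
    IsTopologicalBasis {s : Set ↥(uPts X B) | IsClopen s} := by
  apply isTopologicalBasis_of_isOpen_of_nhds
  · exact fun u hu => hu.isOpen
  · intro a u ha hu
    obtain ⟨F, hFB, haF, hsub⟩ := nhds_basic hbase hu ha
    exact ⟨(Subtype.val ⁻¹' F)ᶜ, (preim_clopen hB hFB).compl, haF, hsub⟩

lemma closure_inter_dense {S F : Set X} (hd : Dense S) (hreg : F = closure (interior F)) :
    closure (F ∩ S) = F := by
  have hcl : IsClosed F := by rw [hreg]; exact isClosed_closure
  apply Set.Subset.antisymm
  · calc closure (F ∩ S) ⊆ closure F := closure_mono Set.inter_subset_left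
      _ = F := hcl.closure_eq
  · calc F = closure (interior F) := hreg
      _ ⊆ closure (closure (interior F ∩ S)) :=
        closure_mono (hd.open_subset_closure_inter isOpen_interior)
      _ = closure (interior F ∩ S) := closure_closure
      _ ⊆ closure (F ∩ S) :=
        closure_mono (Set.inter_subset_inter_left _ interior_subset)

lemma embCl_inter {X₀ : Set X} (A : Clopens ↥X₀) :
    embCl X₀ A ∩ X₀ = Subtype.val '' (A : Set ↥X₀) := by
  apply Set.Subset.antisymm
  · rintro x ⟨hxc, hx₀⟩
    by_contra hxA
    obtain ⟨V, hV, hVeq⟩ := isOpen_induced_iff.mp A.isClopen.compl.isOpen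
    have hmem : (⟨x, hx₀⟩ : ↥X₀) ∈ ((A : Set ↥X₀))ᶜ := fun h => hxA ⟨⟨x, hx₀⟩, h, rfl⟩
    rw [← hVeq] at hmem
    obtain ⟨z, hzV, a, haA, rfl⟩ := mem_closure_iff.mp hxc V hV hmem
    have hav : a ∈ (Subtype.val ⁻¹' V : Set ↥X₀) := hzV
    rw [hVeq] at hav
    exact hav haA
  · rintro x ⟨a, haA, rfl⟩
    exact ⟨subset_closure ⟨a, haA, rfl⟩, a.2⟩

lemma embCl_sup {X₀ : Set X} (A A' : Clopens ↥X₀) :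
    embCl X₀ (A ⊔ A') = embCl X₀ A ∪ embCl X₀ A' := by
  rw [embCl, embCl, embCl, Clopens.coe_sup, Set.image_union, closure_union]

lemma embCl_bot {X₀ : Set X} : embCl X₀ (⊥ : Clopens ↥X₀) = ∅ := by
  rw [embCl, Clopens.coe_bot, Set.image_empty, closure_empty]

lemma embCl_inj {X₀ : Set X} {A A' : Clopens ↥X₀} (h : embCl X₀ A = embCl X₀ A') : A = A' := by
  apply Clopens.ext
  have him : Subtype.val '' (A : Set ↥X₀) = Subtype.val '' (A' : Set ↥X₀) := by
    rw [← embCl_inter, ← embCl_inter, h]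
  rw [← Set.preimage_image_eq (A : Set ↥X₀) Subtype.val_injective, him,
    Set.preimage_image_eq _ Subtype.val_injective]

lemma coe_subset_of_embCl {X₀ : Set X} {A A' : Clopens ↥X₀} (h : embCl X₀ A ⊆ embCl X₀ A') :
    (A : Set ↥X₀) ⊆ (A' : Set ↥X₀) := by
  have him : Subtype.val '' (A : Set ↥X₀) ⊆ Subtype.val '' (A' : Set ↥X₀) := by
    rw [← embCl_inter, ← embCl_inter]
    exact Set.inter_subset_inter_left _ h
  intro a ha
  obtain ⟨b, hb, hba⟩ := him (Set.mem_image_of_mem _ ha)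
  rw [Subtype.val_injective hba] at hb
  exact hb

lemma le_of_embCl {X₀ : Set X} {A A' : Clopens ↥X₀} (h : embCl X₀ A ⊆ embCl X₀ A') :
    A ≤ A' := by
  apply inf_eq_left.mp
  apply Clopens.ext
  rw [Clopens.coe_inf]
  exact Set.inter_eq_left.mpr (coe_subset_of_embCl h)

lemma coe_subset_of_le {α : Type*} [TopologicalSpace α] {A A' : Clopens α} (h : A ≤ A') :
    (A : Set α) ⊆ (A' : Set α) := by
  have h2 := congrArg (fun s : Clopens α => (s : Set α)) (inf_eq_left.mpr h)
  simp only [Clopens.coe_inf] at h2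
  exact Set.inter_eq_left.mp h2

lemma coe_nonempty_of_ne_bot {α : Type*} [TopologicalSpace α] {A : Clopens α} (h : A ≠ ⊥) :
    (A : Set α).Nonempty := by
  rw [Set.nonempty_iff_ne_empty]
  intro hc
  exact h (Clopens.ext (by rw [hc, Clopens.coe_bot]))

lemma embCl_meet {X₀ : Set X} (hd : Dense X₀) (A A' : Clopens ↥X₀)
    (hreg : embCl X₀ (A ⊓ A') = closure (interior (embCl X₀ (A ⊓ A')))) :
    closure (interior (embCl X₀ A ∩ embCl X₀ A')) = embCl X₀ (A ⊓ A') := by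
  have him : Subtype.val '' ((A ⊓ A' : Clopens ↥X₀) : Set ↥X₀)
      = Subtype.val '' (A : Set ↥X₀) ∩ Subtype.val '' (A' : Set ↥X₀) := by
    rw [Clopens.coe_inf, Set.image_inter Subtype.val_injective]
  apply Set.Subset.antisymm
  · apply closure_minimal ?_ isClosed_closure
    intro x hx
    have hxc : x ∈ closure (interior (embCl X₀ A ∩ embCl X₀ A') ∩ X₀) :=
      hd.open_subset_closure_inter isOpen_interior hx
    have hsub : interior (embCl X₀ A ∩ embCl X₀ A') ∩ X₀
        ⊆ Subtype.val '' ((A ⊓ A' : Clopens ↥X₀) : Set ↥X₀) := by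
      rintro y ⟨hy, hy₀⟩
      have hy2 := interior_subset hy
      rw [him]
      constructor
      · rw [← embCl_inter]; exact ⟨hy2.1, hy₀⟩
      · rw [← embCl_inter]; exact ⟨hy2.2, hy₀⟩
    exact closure_mono hsub hxc
  · have hsub : embCl X₀ (A ⊓ A') ⊆ embCl X₀ A ∩ embCl X₀ A' := by
      rw [embCl, him]
      exact Set.subset_inter
        (closure_mono Set.inter_subset_left) (closure_mono Set.inter_subset_right)
    calc embCl X₀ (A ⊓ A') = closure (interior (embCl X₀ (A ⊓ A'))) := hreg
      _ ⊆ closure (interior (embCl X₀ A ∩ embCl X₀ A')) := closure_mono (interior_mono hsub)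

lemma finset_biUnion_mem (hB : IsRCSubalg B) {ι : Type*} [DecidableEq ι] (g : ι → Set X)
    (t : Finset ι) : (∀ i ∈ t, g i ∈ B) → (⋃ i ∈ t, g i) ∈ B := by
  induction t using Finset.induction_on with
  | empty => intro _; simpa using hB.2.1
  | @insert a s hni ih =>
      intro h
      rw [Finset.set_biUnion_insert]
      exact hB.2.2.2.1 _ (h _ (Finset.mem_insert_self _ _)) _
        (ih fun i hi => h i (Finset.mem_insert_of_mem hi))

lemma clopen_classify (hB : IsRCSubalg B)
    (hbase : ∀ U : Set X, IsOpen U → ∀ x ∈ U, ∃ F ∈ B, x ∉ F ∧ Fᶜ ⊆ U)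
    (hcomp : CompactSpace ↥(uPts X B)) (A : Clopens ↥(uPts X B)) :
    ∃ F ∈ B, (A : Set ↥(uPts X B)) = Subtype.val ⁻¹' F := by
  classical
  have hcov : (A : Set ↥(uPts X B)) ⊆
      ⋃ i : {F : Set X // F ∈ B ∧ (Subtype.val ⁻¹' F : Set ↥(uPts X B))ᶜ ⊆ (A : Set _)},
        (Subtype.val ⁻¹' i.val)ᶜ := by
    intro a ha
    obtain ⟨F, hFB, haF, hsub⟩ := nhds_basic hbase A.isClopen.isOpen ha
    exact Set.mem_iUnion.mpr ⟨⟨F, hFB, hsub⟩, haF⟩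
  have hAcomp : IsCompact (A : Set ↥(uPts X B)) := A.isClopen.isClosed.isCompact
  obtain ⟨t, ht⟩ := hAcomp.elim_finite_subcover _
    (fun i : {F : Set X // F ∈ B ∧ (Subtype.val ⁻¹' F : Set ↥(uPts X B))ᶜ ⊆ (A : Set _)} =>
      (preim_clopen hB i.2.1).compl.isOpen) hcov
  have hFB : (⋃ i ∈ t, closure ((i : Set X))ᶜ) ∈ B :=
    finset_biUnion_mem hB _ t (fun i _ => hB.2.2.2.2.2 _ i.2.1)
  refine ⟨_, hFB, ?_⟩
  have hset : (Subtype.val ⁻¹' (⋃ i ∈ t, closure ((i : Set X))ᶜ) : Set ↥(uPts X B))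
      = ⋃ i ∈ t, (Subtype.val ⁻¹' (i : Set X))ᶜ := by
    rw [Set.preimage_iUnion₂]
    exact Set.iUnion₂_congr fun i _ => (preim_compl hB i.2.1).symm
  rw [hset]
  apply Set.Subset.antisymm
  · exact ht
  · intro a ha
    obtain ⟨i, hit, hai⟩ := Set.mem_iUnion₂.mp ha
    exact i.2.2 hai

lemma embCl_preim_eq (hB : IsRCSubalg B) (hd : Dense (uPts X B)) {F : Set X} (hF : F ∈ B) :
    embCl (uPts X B) ⟨Subtype.val ⁻¹' F, preim_clopen hB hF⟩ = F := by
  show closure (Subtype.val '' (Subtype.val ⁻¹' F : Set ↥(uPts X B))) = F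
  rw [Subtype.image_preimage_coe, Set.inter_comm]
  exact closure_inter_dense hd (hB.1 F hF)

lemma rc_eq (hB : IsRCSubalg B)
    (hbase : ∀ U : Set X, IsOpen U → ∀ x ∈ U, ∃ F ∈ B, x ∉ F ∧ Fᶜ ⊆ U)
    (hd : Dense (uPts X B)) (hcomp : CompactSpace ↥(uPts X B)) :
    {F : Set X | ∃ A : Clopens ↥(uPts X B), F = embCl (uPts X B) A} = B := by
  apply Set.Subset.antisymm
  · rintro F ⟨A, rfl⟩
    obtain ⟨G, hGB, hAG⟩ := clopen_classify hB hbase hcomp A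
    have hA : A = ⟨Subtype.val ⁻¹' G, preim_clopen hB hGB⟩ := Clopens.ext hAG
    rw [hA, embCl_preim_eq hB hd hGB]
    exact hGB
  · intro F hF
    exact ⟨⟨Subtype.val ⁻¹' F, preim_clopen hB hF⟩, (embCl_preim_eq hB hd hF).symm⟩

lemma unique_sub (hB : IsRCSubalg B)
    (hbase : ∀ U : Set X, IsOpen U → ∀ x ∈ U, ∃ F ∈ B, x ∉ F ∧ Fᶜ ⊆ U)
    (ht0 : T0Space X)
    (X₀ : Set X) (hd : Dense X₀) (hcomp : CompactSpace ↥X₀)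
    (heq : {F : Set X | ∃ A : Clopens ↥X₀, F = embCl X₀ A} = B) : X₀ = uPts X B := by
  classical
  have hmemB : ∀ A : Clopens ↥X₀, embCl X₀ A ∈ B := fun A => by
    rw [← heq]; exact ⟨A, rfl⟩
  have hrepr : ∀ F ∈ B, ∃ A : Clopens ↥X₀, F = embCl X₀ A := fun F hF => by
    rw [← heq] at hF; exact hF
  have hmeet : ∀ A A' : Clopens ↥X₀,
      closure (interior (embCl X₀ A ∩ embCl X₀ A')) = embCl X₀ (A ⊓ A') :=
    fun A A' => embCl_meet hd A A' (hB.1 _ (hmemB (A ⊓ A')))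
  apply Set.Subset.antisymm
  · -- X₀ ⊆ uPts
    intro x hx₀
    show IsUPointOf B x
    intro F hFB G hGB hxFG
    obtain ⟨A, rfl⟩ := hrepr F hFB
    obtain ⟨A', rfl⟩ := hrepr G hGB
    have hx1 : x ∈ embCl X₀ A ∩ X₀ := ⟨hxFG.1, hx₀⟩
    have hx2 : x ∈ embCl X₀ A' ∩ X₀ := ⟨hxFG.2, hx₀⟩
    rw [embCl_inter] at hx1 hx2
    rw [hmeet A A']
    apply subset_closure
    rw [Clopens.coe_inf, Set.image_inter Subtype.val_injective]
    exact ⟨hx1, hx2⟩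
  · -- uPts ⊆ X₀
    intro x hx
    have htop : x ∈ embCl X₀ (⊤ : Clopens ↥X₀) := by
      show x ∈ closure (Subtype.val '' ((⊤ : Clopens ↥X₀) : Set ↥X₀))
      rw [Clopens.coe_top, Set.image_univ, Subtype.range_coe]
      exact hd x
    have hinter : ∀ A A' : Clopens ↥X₀, x ∈ embCl X₀ A → x ∈ embCl X₀ A' →
        x ∈ embCl X₀ (A ⊓ A') := by
      intro A A' hA hA'
      rw [← hmeet A A']
      exact hx _ (hmemB A) _ (hmemB A') ⟨hA, hA'⟩
    have hfin : ∀ t : Finset (Clopens ↥X₀), (∀ A ∈ t, x ∈ embCl X₀ A) →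
        ∃ A₀ : Clopens ↥X₀, x ∈ embCl X₀ A₀ ∧ (A₀ : Set ↥X₀) ⊆ ⋂ A ∈ t, (A : Set ↥X₀) := by
      intro t
      induction t using Finset.induction_on with
      | empty => exact fun _ => ⟨⊤, htop, by simp⟩
      | @insert a s hni ih =>
          intro h
          obtain ⟨A₀, hA₀, hsub⟩ := ih (fun A hA => h A (Finset.mem_insert_of_mem hA))
          refine ⟨a ⊓ A₀, hinter a A₀ (h a (Finset.mem_insert_self _ _)) hA₀, ?_⟩
          rw [Finset.set_biInter_insert]
          intro y hy
          rw [Clopens.coe_inf] at hy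
          exact ⟨hy.1, hsub hy.2⟩
    have hglobal : (Set.univ ∩
        ⋂ A : {A : Clopens ↥X₀ // x ∈ embCl X₀ A}, ((A : Clopens ↥X₀) : Set ↥X₀)).Nonempty := by
      by_contra hcon
      rw [Set.not_nonempty_iff_eq_empty] at hcon
      obtain ⟨t, ht⟩ := isCompact_univ.elim_finite_subfamily_closed
        (fun A : {A : Clopens ↥X₀ // x ∈ embCl X₀ A} => ((A : Clopens ↥X₀) : Set ↥X₀))
        (fun A => (A : Clopens ↥X₀).isClopen.isClosed) hcon
      obtain ⟨A₀, hA₀, hsub⟩ := hfin (t.image Subtype.val) (by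
        intro A hA
        obtain ⟨i, hit, rfl⟩ := Finset.mem_image.mp hA
        exact i.2)
      have hA₀ne : (A₀ : Set ↥X₀).Nonempty := by
        have h1 : (Subtype.val '' (A₀ : Set ↥X₀)).Nonempty :=
          closure_nonempty_iff.mp ⟨x, hA₀⟩
        exact h1.of_image
      obtain ⟨y, hy⟩ := hA₀ne
      have hy2 : y ∈ Set.univ ∩ ⋂ i ∈ t, ((i : Clopens ↥X₀) : Set ↥X₀) := by
        refine ⟨Set.mem_univ _, ?_⟩
        apply Set.mem_iInter₂.mpr
        intro i hit
        exact Set.mem_iInter₂.mp (hsub hy) (i : Clopens ↥X₀) (Finset.mem_image_of_mem _ hit)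
      rw [ht] at hy2
      exact hy2
    obtain ⟨y, -, hy⟩ := hglobal
    have hymem : ∀ A : Clopens ↥X₀, x ∈ embCl X₀ A → y ∈ (A : Set ↥X₀) := by
      intro A hA
      exact Set.mem_iInter.mp hy ⟨A, hA⟩
    have hsg : sg B x = sg B (y : X) := by
      apply Set.Subset.antisymm
      · rintro F ⟨hFB, hxF⟩
        obtain ⟨A, rfl⟩ := hrepr F hFB
        exact ⟨hFB, subset_closure (Set.mem_image_of_mem _ (hymem A hxF))⟩
      · rintro F ⟨hFB, hyF⟩
        refine ⟨hFB, ?_⟩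
        by_contra hxF
        have hFc : closure Fᶜ ∈ B := hB.2.2.2.2.2 F hFB
        have hbuf := upoint_buf hB hx
        have hxFc : x ∈ closure Fᶜ := by
          rcases buf_mem_or hB hbuf hFB with h | h
          · exact absurd h.2 hxF
          · exact h.2
        obtain ⟨Astar, hAstar⟩ := hrepr _ hFc
        obtain ⟨AF, hAF⟩ := hrepr F hFB
        have hyAstar : y ∈ (Astar : Set ↥X₀) := hymem Astar (by rw [← hAstar]; exact hxFc)
        have hyAF : y ∈ (AF : Set ↥X₀) := by
          have hyF2 : (y : X) ∈ F ∩ X₀ := ⟨hyF, y.2⟩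
          rw [hAF, embCl_inter] at hyF2
          obtain ⟨a, ha, hay⟩ := hyF2
          rw [Subtype.val_injective hay] at ha
          exact ha
        have h0 : embCl X₀ (AF ⊓ Astar) = ∅ := by
          rw [← hmeet, ← hAF, ← hAstar, interior_inter_closure_compl, closure_empty]
        have hyin : (y : X) ∈ embCl X₀ (AF ⊓ Astar) := by
          apply subset_closure
          rw [Clopens.coe_inf, Set.image_inter Subtype.val_injective]
          exact ⟨Set.mem_image_of_mem _ hyAF, Set.mem_image_of_mem _ hyAstar⟩
        rw [h0] at hyin
        exact hyin
    have hxy := sg_inj hbase ht0 hsg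
    rw [hxy]
    exact y.2

end Stmt19
end

open Stmt19

theorem stmt19 {X : Type*} [TopologicalSpace X] {B : Set (Set X)}
    -- `(X,B)` is a mereotopological `T₀`-space …
    (hB : IsRCSubalg B)
    (hbase : ∀ U : Set X, IsOpen U → ∀ x ∈ U, ∃ F ∈ B, x ∉ F ∧ Fᶜ ⊆ U)
    (ht0 : T0Space X)
    -- … which is mereocompact
    (hmc : ∀ Γ : Set (Set X), IsClanOn B Γ → ∃ x : X, Γ = {F ∈ B | x ∈ F}) :
    -- `u(X,B)` is a dense zero-dimensional compact Hausdorff subspace of `X`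
    Dense (uPts X B) ∧
    CompactSpace ↥(uPts X B) ∧ T2Space ↥(uPts X B) ∧
    IsTopologicalBasis {s : Set ↥(uPts X B) | IsClopen s} ∧
    -- with `RC(X, u(X,B)) = B`
    {F : Set X | ∃ A : Clopens ↥(uPts X B), F = embCl (uPts X B) A} = B ∧
    -- and it is the unique such subspace
    (∀ X₀ : Set X, Dense X₀ → CompactSpace ↥X₀ → T2Space ↥X₀ →
      IsTopologicalBasis {s : Set ↥X₀ | IsClopen s} →
      {F : Set X | ∃ A : Clopens ↥X₀, F = embCl X₀ A} = B → X₀ = uPts X B) ∧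
    -- moreover, `(X, u(X,B))` is a 2-contact space
    TwoContact X (uPts X B) := by
  have hd : Dense (uPts X B) := dense_upts hB hbase hmc
  have hcomp : CompactSpace ↥(uPts X B) := compact_upts hB hbase hmc
  have ht2 : T2Space ↥(uPts X B) := t2_upts hB hbase ht0
  have hbasis : IsTopologicalBasis {s : Set ↥(uPts X B) | IsClopen s} := basis_upts hB hbase
  have hrc : {F : Set X | ∃ A : Clopens ↥(uPts X B), F = embCl (uPts X B) A} = B :=
    rc_eq hB hbase hd hcomp
  have hmemB' : ∀ A : Clopens ↥(uPts X B), embCl (uPts X B) A ∈ B := fun A =>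
    (Set.ext_iff.mp hrc (embCl (uPts X B) A)).mp ⟨A, rfl⟩
  have hrepr' : ∀ F ∈ B, ∃ A : Clopens ↥(uPts X B), F = embCl (uPts X B) A := fun F hF =>
    (Set.ext_iff.mp hrc F).mpr hF
  refine ⟨hd, hcomp, ht2, hbasis, hrc,
    fun X₀ h1 h2 _ _ h5 => unique_sub hB hbase ht0 X₀ h1 h2 h5,
    ⟨hd, ht0, hcomp, ht2, hbasis, ?_, ?_⟩⟩
  · -- base
    intro U hU x hxU
    obtain ⟨F, hFB, hxF, hFU⟩ := hbase U hU x hxU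
    refine ⟨⟨Subtype.val ⁻¹' F, preim_clopen hB hFB⟩, ?_, ?_⟩
    · rw [embCl_preim_eq hB hd hFB]; exact hxF
    · rw [embCl_preim_eq hB hd hFB]; exact hFU
  · -- cs4
    intro Γ hΓ
    obtain ⟨hΓne, hΓbot, hΓup, hΓprime, hΓcon⟩ := hΓ
    have hclan : IsClanOn B ((embCl (uPts X B)) '' Γ) := by
      refine ⟨?_, hΓne.image _, ?_, ?_, ?_, ?_⟩
      · rintro F ⟨A, hA, rfl⟩
        exact hmemB' A
      · rintro ⟨A, hA, hA0⟩
        have hAbot : A = ⊥ := embCl_inj (by rw [hA0, embCl_bot])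
        rw [hAbot] at hA
        exact hΓbot hA
      · rintro F ⟨A, hA, rfl⟩ G hGB hsub
        obtain ⟨A', rfl⟩ := hrepr' G hGB
        exact ⟨A', hΓup A hA A' (le_of_embCl hsub), rfl⟩
      · rintro F hFB G hGB ⟨A, hA, hAeq⟩
        obtain ⟨AF, rfl⟩ := hrepr' F hFB
        obtain ⟨AG, rfl⟩ := hrepr' G hGB
        have hAe : A = AF ⊔ AG := embCl_inj (by rw [hAeq, embCl_sup])
        rw [hAe] at hA
        rcases hΓprime AF AG hA with h | h
        · exact Or.inl ⟨AF, h, rfl⟩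
        · exact Or.inr ⟨AG, h, rfl⟩
      · rintro F ⟨A, hA, rfl⟩ G ⟨A', hA', rfl⟩
        rcases hΓcon A hA A' hA' with h | h | h
        · exact h
        · obtain ⟨p, h1, h2⟩ := h
          exact ⟨p, h2, h1⟩
        · obtain ⟨a, ha⟩ := coe_nonempty_of_ne_bot h
          rw [Clopens.coe_inf] at ha
          exact ⟨(a : X), subset_closure (Set.mem_image_of_mem _ ha.1),
            subset_closure (Set.mem_image_of_mem _ ha.2)⟩
    obtain ⟨x, hxeq⟩ := hmc _ hclan
    refine ⟨x, ?_⟩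
    ext A
    constructor
    · intro hA
      have hm : embCl (uPts X B) A ∈ (embCl (uPts X B)) '' Γ := ⟨A, hA, rfl⟩
      rw [hxeq] at hm
      exact hm.2
    · intro hxA
      have hm : embCl (uPts X B) A ∈ (embCl (uPts X B)) '' Γ := by
        rw [hxeq]
        exact ⟨hmemB' A, hxA⟩
      obtain ⟨A'', hA'', heq2⟩ := hm
      rw [← embCl_inj heq2]
      exact hA''
end
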